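/- Let 𝔾 be a Carnot group, Ω ⊆ 𝔾 a domain, and H : Ω × ℝ^m → ℝ satisfy (H). If H is upper semicontinuous on the horizontal bundle HΩ, then liminf_{t→0⁺} d_{σ*}(x, x·δ_t(ξ,η))/t ≥ σ*(x,ξ) for every x ∈ Ω, every ξ ∈ ℝ^m and every η ∈ ℝ^{n−m}, where δ_t denotes the intrinsic dilation of 𝔾 and · the group law. -/

import Mathlib

open Filter Topology MeasureTheory Set
open scoped RealInnerProductSpace

noncomputable section

/-- Abbreviation for Euclidean space `ℝ^n`. -/
abbrev Euc (n : ℕ) := EuclideanSpace ℝ (Fin n)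

/-- A (coordinatized) Carnot group of topological dimension `n`, rank `m` and step `k`,
identified with `ℝ^n` via exponential coordinates. -/
structure CarnotGroup (n m k : ℕ) where
  pos_m : 0 < m
  m_le_n : m ≤ n
  pos_k : 0 < k
  /-- the group law (in exponential coordinates) -/
  mul : Euc n → Euc n → Euc n
  mul_assoc' : ∀ x y z, mul (mul x y) z = mul x (mul y z)
  zero_mul' : ∀ x, mul 0 x = x
  mul_zero' : ∀ x, mul x 0 = x
  /-- in exponential coordinates the group inverse is `-x` -/
  neg_mul_cancel : ∀ x, mul (-x) x = 0
  smooth_mul : ContDiff ℝ (⊤ : ℕ∞) (fun q : Euc n × Euc n => mul q.1 q.2)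
  /-- the layer (weight) of each coordinate in the stratification -/
  w : Fin n → ℕ
  w_first_layer : ∀ j : Fin n, (j : ℕ) < m ↔ w j = 1
  w_bounds : ∀ j : Fin n, 1 ≤ w j ∧ w j ≤ k
  /-- intrinsic dilations `δ_λ` -/
  dil : ℝ → Euc n → Euc n
  dil_apply : ∀ (lam : ℝ) (y : Euc n) (j : Fin n), dil lam y j = lam ^ w j * y j
  dil_mul : ∀ (lam : ℝ) (x y : Euc n), dil lam (mul x y) = mul (dil lam x) (dil lam y)
  /-- the generating horizontal vector fields `X₁, …, X_m` -/
  X : Fin m → Euc n → Euc n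
  smooth_X : ∀ i, ContDiff ℝ (⊤ : ℕ∞) (X i)
  X_zero : ∀ i, X i 0 = EuclideanSpace.single (Fin.castLE m_le_n i) 1
  X_left_invariant : ∀ (g x : Euc n) (i : Fin m),
    X i (mul g x) = fderiv ℝ (mul g) x (X i x)
  /-- Chow–Rashevskii connectivity: any two points of an open connected set are joined
  by a sub-unit horizontal curve inside the set. -/
  chow : ∀ S : Set (Euc n), IsOpen S → IsPreconnected S → ∀ x ∈ S, ∀ y ∈ S,
    ∃ (T : ℝ) (γ : ℝ → Euc n) (a : ℝ → Euc m),
      0 < T ∧ (∀ t ∈ Icc (0:ℝ) T, γ t ∈ S) ∧ ContinuousOn γ (Icc 0 T) ∧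
      AEStronglyMeasurable a (volume.restrict (Icc (0:ℝ) T)) ∧
      (∀ᵐ t ∂(volume.restrict (Icc (0:ℝ) T)), ‖a t‖ ≤ 1) ∧
      (∀ t ∈ Icc (0:ℝ) T, γ t = γ 0 + ∫ s in (0:ℝ)..t, ∑ i, a s i • X i (γ s)) ∧
      γ 0 = x ∧ γ T = y

/-- The sublevel set `Z(x) = {p : H(x,p) ≤ 0}` of a Hamiltonian. -/
def Zset {n m : ℕ} (H : Euc n → Euc m → ℝ) (x : Euc n) : Set (Euc m) := {p | H x p ≤ 0}

/-- The structural assumptions (H) for a Hamiltonian on `S × ℝ^m`, with constant `α`. -/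
structure SatisfiesH {n m : ℕ} (S : Set (Euc n)) (H : Euc n → Euc m → ℝ) (α : ℝ) : Prop where
  one_lt_alpha : 1 < α
  /-- (H1) Borel measurability of `H` on `S × ℝ^m` -/
  borel : Measurable ((S ×ˢ (univ : Set (Euc m))).restrict (fun q : Euc n × Euc m => H q.1 q.2))
  /-- (H2) -/
  closed : ∀ x ∈ S, IsClosed (Zset H x)
  convex : ∀ x ∈ S, Convex ℝ (Zset H x)
  frontier_eq : ∀ x ∈ S, frontier (Zset H x) = {p | H x p = 0}
  /-- (H3) -/
  ball_sub : ∀ x ∈ S, Metric.ball (0 : Euc m) (1/α) ⊆ Zset H x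
  sub_ball : ∀ x ∈ S, Zset H x ⊆ Metric.ball (0 : Euc m) α

/-- The support-function norm `σ*(x,p) = sup{⟨-ξ,p⟩ : ξ ∈ Z(x)}`. -/
def sigmaStar {n m : ℕ} (H : Euc n → Euc m → ℝ) (x : Euc n) (p : Euc m) : ℝ :=
  sSup ((fun ξ : Euc m => ⟪-ξ, p⟫) '' Zset H x)

/-- `K ∈ 𝒦(H,Ω)`: a Hamiltonian on all of `ℝ^n × ℝ^m` satisfying (H) and agreeing
with `H` on `Ω × ℝ^m`. -/
def ExtendsH {n m : ℕ} (Ω : Set (Euc n)) (H K : Euc n → Euc m → ℝ) : Prop :=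
  (∃ α : ℝ, SatisfiesH (univ : Set (Euc n)) K α) ∧ ∀ x ∈ Ω, ∀ p, K x p = H x p

/-- The length of a curve `γ : [0,T] → ℝ^n` with respect to a (possibly non-symmetric)
distance `d`, as a supremum over partitions. -/
def lengthVia {n : ℕ} (d : Euc n → Euc n → ℝ) (γ : ℝ → Euc n) (T : ℝ) : ℝ :=
  sSup {L | ∃ (s : ℕ) (t : Fin (s + 1) → ℝ), Monotone t ∧ t 0 = 0 ∧ t (Fin.last s) = T ∧
    L = ∑ j : Fin s, d (γ (t j.castSucc)) (γ (t j.succ))}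

namespace CarnotGroup

variable {n m k : ℕ} (G : CarnotGroup n m k)

/-- `γ : [0,T] → S` is a horizontal curve with control `a` (the coordinates of its tangent
vector with respect to `X₁,…,X_m`). -/
def IsHorizIn (S : Set (Euc n)) (T : ℝ) (γ : ℝ → Euc n) (a : ℝ → Euc m) : Prop :=
  0 < T ∧ (∀ t ∈ Icc (0:ℝ) T, γ t ∈ S) ∧ ContinuousOn γ (Icc 0 T) ∧
  AEStronglyMeasurable a (volume.restrict (Icc (0:ℝ) T)) ∧
  (∃ C : ℝ, ∀ᵐ t ∂(volume.restrict (Icc (0:ℝ) T)), ‖a t‖ ≤ C) ∧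
  (∀ t ∈ Icc (0:ℝ) T, γ t = γ 0 + ∫ s in (0:ℝ)..t, ∑ i, a s i • G.X i (γ s))

/-- Sub-unit horizontal curve: `‖a(t)‖ ≤ 1` a.e. -/
def IsSubunitIn (S : Set (Euc n)) (T : ℝ) (γ : ℝ → Euc n) (a : ℝ → Euc m) : Prop :=
  G.IsHorizIn S T γ a ∧ ∀ᵐ t ∂(volume.restrict (Icc (0:ℝ) T)), ‖a t‖ ≤ 1

/-- The Carnot–Carathéodory distance associated to the set `S` (for `S = univ` this is
the global distance `d_𝔾`). -/
def ccDist (S : Set (Euc n)) (x y : Euc n) : ℝ :=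
  sInf {L | ∃ T γ a, G.IsSubunitIn S T γ a ∧ γ 0 = x ∧ γ T = y ∧
    L = ∫ t in (0:ℝ)..T, ‖a t‖}

/-- The optical length function `d_{σ*}` associated to a Hamiltonian `H`, with curves in `S`. -/
def optDist (S : Set (Euc n)) (H : Euc n → Euc m → ℝ) (x y : Euc n) : ℝ :=
  sInf {L | ∃ T γ a, G.IsHorizIn S T γ a ∧ γ 0 = x ∧ γ T = y ∧
    L = ∫ t in (0:ℝ)..T, sigmaStar H (γ t) (a t)}

/-- Monge subsolution property relative to a given optical length function `d`. -/
def MongeSubVia (Ω : Set (Euc n)) (d : Euc n → Euc n → ℝ) (u : Euc n → ℝ) : Prop :=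
  ∀ x₀ ∈ Ω, 0 ≤ liminf (fun x => (u x - u x₀ + d x₀ x) / G.ccDist Ω x₀ x) (𝓝[Ω \ {x₀}] x₀)

/-- Monge supersolution property relative to a given optical length function `d`. -/
def MongeSupVia (Ω : Set (Euc n)) (d : Euc n → Euc n → ℝ) (u : Euc n → ℝ) : Prop :=
  ∀ x₀ ∈ Ω, liminf (fun x => (u x - u x₀ + d x₀ x) / G.ccDist Ω x₀ x) (𝓝[Ω \ {x₀}] x₀) ≤ 0

/-- Monge solution property relative to a given optical length function `d`. -/
def MongeSolVia (Ω : Set (Euc n)) (d : Euc n → Euc n → ℝ) (u : Euc n → ℝ) : Prop :=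
  ∀ x₀ ∈ Ω, liminf (fun x => (u x - u x₀ + d x₀ x) / G.ccDist Ω x₀ x) (𝓝[Ω \ {x₀}] x₀) = 0

/-- `u` is a Monge subsolution to `H(x, Xu) = 0` in `Ω`. -/
def MongeSub (Ω : Set (Euc n)) (H : Euc n → Euc m → ℝ) (u : Euc n → ℝ) : Prop :=
  G.MongeSubVia Ω (G.optDist Ω H) u

/-- `u` is a Monge supersolution to `H(x, Xu) = 0` in `Ω`. -/
def MongeSup (Ω : Set (Euc n)) (H : Euc n → Euc m → ℝ) (u : Euc n → ℝ) : Prop :=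
  G.MongeSupVia Ω (G.optDist Ω H) u

/-- `u` is a Monge solution to `H(x, Xu) = 0` in `Ω`. -/
def MongeSol (Ω : Set (Euc n)) (H : Euc n → Euc m → ℝ) (u : Euc n → ℝ) : Prop :=
  G.MongeSolVia Ω (G.optDist Ω H) u

/-- `ψ ∈ C¹_X(Ω)` with horizontal gradient `Xψ`: both are continuous on `Ω` and `Xψ` is
the derivative of `ψ` along the horizontal directions. -/
def IsC1X (Ω : Set (Euc n)) (ψ : Euc n → ℝ) (Xψ : Euc n → Euc m) : Prop :=
  ContinuousOn ψ Ω ∧ ContinuousOn Xψ Ω ∧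
  ∀ x ∈ Ω, ∀ i : Fin m, HasDerivAt (fun t : ℝ => ψ (x + t • G.X i x)) (Xψ x i) 0

/-- `u` is a viscosity subsolution to `H(x, Xu) = 0` in `Ω`. -/
def ViscSub (Ω : Set (Euc n)) (H : Euc n → Euc m → ℝ) (u : Euc n → ℝ) : Prop :=
  ∀ x₀ ∈ Ω, ∀ ψ Xψ, G.IsC1X Ω ψ Xψ →
    IsLocalMaxOn (fun x => u x - ψ x) Ω x₀ → H x₀ (Xψ x₀) ≤ 0

/-- `u` is a viscosity supersolution to `H(x, Xu) = 0` in `Ω`. -/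
def ViscSup (Ω : Set (Euc n)) (H : Euc n → Euc m → ℝ) (u : Euc n → ℝ) : Prop :=
  ∀ x₀ ∈ Ω, ∀ ψ Xψ, G.IsC1X Ω ψ Xψ →
    IsLocalMinOn (fun x => u x - ψ x) Ω x₀ → 0 ≤ H x₀ (Xψ x₀)

/-- Projection on the first-layer coordinates, `π(y) = (y₁,…,y_m)`. -/
def pi1 (y : Euc n) : Euc m := WithLp.toLp 2 (fun i => y (Fin.castLE G.m_le_n i))

/-- The first order superjet `∂⁺_X u(x₀)`. -/
def superjet (Ω : Set (Euc n)) (u : Euc n → ℝ) (x₀ : Euc n) : Set (Euc m) :=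
  {v | limsup (fun x => (u x - u x₀ - ⟪v, G.pi1 (G.mul (-x₀) x)⟫) / G.ccDist Ω x₀ x)
      (𝓝[Ω \ {x₀}] x₀) ≤ 0}

/-- The first order subjet `∂⁻_X u(x₀)`. -/
def subjet (Ω : Set (Euc n)) (u : Euc n → ℝ) (x₀ : Euc n) : Set (Euc m) :=
  {v | 0 ≤ liminf (fun x => (u x - u x₀ - ⟪v, G.pi1 (G.mul (-x₀) x)⟫) / G.ccDist Ω x₀ x)
      (𝓝[Ω \ {x₀}] x₀)}

/-- `u` is a jet subsolution to `H(x, Xu) = 0` in `Ω`. -/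
def JetSub (Ω : Set (Euc n)) (H : Euc n → Euc m → ℝ) (u : Euc n → ℝ) : Prop :=
  ∀ x₀ ∈ Ω, ∀ v ∈ G.superjet Ω u x₀, H x₀ v ≤ 0

/-- `u` is a jet supersolution to `H(x, Xu) = 0` in `Ω`. -/
def JetSup (Ω : Set (Euc n)) (H : Euc n → Euc m → ℝ) (u : Euc n → ℝ) : Prop :=
  ∀ x₀ ∈ Ω, ∀ v ∈ G.subjet Ω u x₀, 0 ≤ H x₀ v

/-- `u ∈ W^{1,∞}_{X,loc}(Ω)`, i.e. `u` is locally Lipschitz with respect to the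
Carnot–Carathéodory distance `d_Ω`. -/
def LocLipCC (Ω : Set (Euc n)) (u : Euc n → ℝ) : Prop :=
  ∀ x ∈ Ω, ∃ ε > (0:ℝ), ∃ C : ℝ, ∀ y ∈ Ω, ∀ z ∈ Ω,
    G.ccDist Ω x y < ε → G.ccDist Ω x z < ε → |u y - u z| ≤ C * G.ccDist Ω y z

/-- The homogeneous (Korányi-type) norm `‖y‖ = (Σ_j |y^{(j)}|^{2k!/j})^{1/(2k!)}`. -/
def koranyiNorm (y : Euc n) : ℝ :=
  (∑ j ∈ Finset.Icc 1 k,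
      (Real.sqrt (∑ i ∈ Finset.univ.filter (fun i : Fin n => G.w i = j), (y i) ^ 2)) ^
        ((2 * (Nat.factorial k) : ℝ) / j)) ^ ((1 : ℝ) / (2 * Nat.factorial k))

/-- The Korányi gauge distance `𝔡(x,y) = ‖x⁻¹ · y‖`. -/
def koranyiDist (x y : Euc n) : ℝ := G.koranyiNorm (G.mul (-x) y)

end CarnotGroup
namespace CarnotGroup

variable {n m k : ℕ} (G : CarnotGroup n m k)

/-! ### Basic algebraic lemmas -/

lemma w_ne_zero (j : Fin n) : G.w j ≠ 0 := Nat.one_le_iff_ne_zero.mp (G.w_bounds j).1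

lemma dil_zero (y : Euc n) : G.dil 0 y = 0 := by
  ext j
  rw [G.dil_apply]
  simp [zero_pow (G.w_ne_zero j)]

lemma dil_zero_right (lam : ℝ) : G.dil lam 0 = 0 := by
  ext j; rw [G.dil_apply]; simp

lemma dil_one (y : Euc n) : G.dil 1 y = y := by
  ext j; rw [G.dil_apply]; simp

lemma dil_dil (lam mu : ℝ) (y : Euc n) : G.dil lam (G.dil mu y) = G.dil (lam * mu) y := by
  ext j; rw [G.dil_apply, G.dil_apply, G.dil_apply, mul_pow]; ring

lemma mul_neg_cancel_left (x v : Euc n) : G.mul (-x) (G.mul x v) = v := by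
  rw [← G.mul_assoc', G.neg_mul_cancel, G.zero_mul']

lemma mul_neg_cancel_left' (x v : Euc n) : G.mul x (G.mul (-x) v) = v := by
  have := G.mul_neg_cancel_left (-x) v
  rwa [neg_neg] at this

/-! ### Continuous linear maps -/

/-- The dilation as a continuous linear map. -/
def dilL (lam : ℝ) : Euc n →L[ℝ] Euc n :=
  (EuclideanSpace.equiv (Fin n) ℝ).symm.toContinuousLinearMap.comp
    (ContinuousLinearMap.pi fun j => (lam ^ G.w j) • EuclideanSpace.proj j)

lemma dilL_apply (lam : ℝ) (y : Euc n) : G.dilL lam y = G.dil lam y := by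
  ext j
  rw [G.dil_apply]
  rfl

/-- Projection on the first-layer coordinates as a continuous linear map. -/
def pi1L : Euc n →L[ℝ] Euc m :=
  (EuclideanSpace.equiv (Fin m) ℝ).symm.toContinuousLinearMap.comp
    (ContinuousLinearMap.pi fun i => EuclideanSpace.proj (Fin.castLE G.m_le_n i))

lemma pi1L_apply (y : Euc n) : G.pi1L y = G.pi1 y := rfl

/-- First-layer truncation map. -/
def fl (y : Euc n) : Euc n :=
  (EuclideanSpace.equiv (Fin n) ℝ).symm (fun j => if G.w j = 1 then y j else 0)

lemma fl_apply (y : Euc n) (j : Fin n) : G.fl y j = if G.w j = 1 then y j else 0 := rfl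

/-! ### Dilations and derivatives -/

lemma hasDerivAt_dil (x : Euc n) : HasDerivAt (fun lam : ℝ => G.dil lam x) (G.fl x) 0 := by
  have h : HasDerivAt (fun lam : ℝ => (fun j => lam ^ G.w j * x j : Fin n → ℝ))
      (fun j => if G.w j = 1 then x j else 0) 0 := by
    rw [hasDerivAt_pi]
    intro j
    have h1 : HasDerivAt (fun lam : ℝ => lam ^ G.w j * x j)
        ((G.w j * (0:ℝ) ^ (G.w j - 1)) * x j) 0 := (hasDerivAt_pow (G.w j) 0).mul_const (x j)
    refine h1.congr_deriv ?_
    rcases Nat.lt_or_ge (G.w j) 2 with h2 | h2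
    · have : G.w j = 1 := le_antisymm (by omega) (G.w_bounds j).1
      simp [this]
    · have hj : G.w j ≠ 1 := by omega
      have : (0:ℝ) ^ (G.w j - 1) = 0 := zero_pow (by omega)
      simp [hj, this]
  have h2 := ((EuclideanSpace.equiv (Fin n) ℝ).symm.toContinuousLinearMap.hasFDerivAt).comp_hasDerivAt 0 h
  refine h2.congr_of_eventuallyEq (Filter.Eventually.of_forall fun lam => ?_)
  show G.dil lam x = _
  ext j
  rw [G.dil_apply]
  rfl

/-- First-layer coordinates are additive under the group law. -/
lemma fl_mul (x y : Euc n) : G.fl (G.mul x y) = G.fl x + G.fl y := by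
  set F : Euc n × Euc n → Euc n := fun q => G.mul q.1 q.2 with hF
  have hFd : DifferentiableAt ℝ F (0, 0) :=
    (G.smooth_mul.differentiable (by simp)).differentiableAt
  have hFD : HasFDerivAt F (fderiv ℝ F (0, 0)) (0, 0) := hFd.hasFDerivAt
  have key : ∀ u v : Euc n, fderiv ℝ F (0, 0) (G.fl u, G.fl v) = G.fl (G.mul u v) := by
    intro u v
    have hc : HasDerivAt (fun lam : ℝ => (G.dil lam u, G.dil lam v)) (G.fl u, G.fl v) 0 :=
      (G.hasDerivAt_dil u).prodMk (G.hasDerivAt_dil v)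
    have hc0 : (fun lam : ℝ => (G.dil lam u, G.dil lam v)) 0 = (0, 0) := by
      simp [G.dil_zero]
    have hFD' : HasFDerivAt F (fderiv ℝ F (0, 0))
        ((fun lam : ℝ => (G.dil lam u, G.dil lam v)) 0) := by rw [hc0]; exact hFD
    have hcomp : HasDerivAt (fun lam : ℝ => F (G.dil lam u, G.dil lam v))
        (fderiv ℝ F (0, 0) (G.fl u, G.fl v)) 0 := by
      have h := hFD'.comp_hasDerivAt 0 hc
      exact h
    have heq : (fun lam : ℝ => F (G.dil lam u, G.dil lam v)) =
        fun lam : ℝ => G.dil lam (G.mul u v) := by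
      funext lam
      show G.mul (G.dil lam u) (G.dil lam v) = _
      rw [← G.dil_mul]
    rw [heq] at hcomp
    exact hcomp.unique (G.hasDerivAt_dil (G.mul u v))
  have h1 := key x 0
  have h2 := key 0 y
  have h3 := key x y
  rw [G.mul_zero'] at h1
  rw [G.zero_mul'] at h2
  have hfl0 : G.fl (0 : Euc n) = 0 := by
    ext j; rw [fl_apply]; simp
  rw [hfl0] at h1 h2
  have hsplit : ((G.fl x, G.fl y) : Euc n × Euc n) = (G.fl x, 0) + (0, G.fl y) := by
    simp [Prod.ext_iff]
  rw [← h3, hsplit, map_add, h1, h2]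

lemma mul_apply_first (x y : Euc n) (j : Fin n) (hj : G.w j = 1) :
    G.mul x y j = x j + y j := by
  have := congrFun (congrArg (fun v : Euc n => (v : Fin n → ℝ)) (G.fl_mul x y)) j
  have hL : G.fl (G.mul x y) j = G.mul x y j := by rw [fl_apply, if_pos hj]
  have hR : (G.fl x + G.fl y) j = x j + y j := by
    have : (G.fl x + G.fl y) j = G.fl x j + G.fl y j := rfl
    rw [this, fl_apply, fl_apply, if_pos hj, if_pos hj]
  rw [← hL, ← hR]
  exact this

lemma w_castLE (i : Fin m) : G.w (Fin.castLE G.m_le_n i) = 1 :=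
  (G.w_first_layer _).mp (by simpa using i.isLt)

lemma pi1_mul (x y : Euc n) : G.pi1 (G.mul x y) = G.pi1 x + G.pi1 y := by
  ext i
  show G.mul x y (Fin.castLE G.m_le_n i) = _
  rw [G.mul_apply_first x y _ (G.w_castLE i)]
  rfl

lemma pi1_dil (t : ℝ) (z : Euc n) : G.pi1 (G.dil t z) = t • G.pi1 z := by
  ext i
  show G.dil t z (Fin.castLE G.m_le_n i) = _
  rw [G.dil_apply, G.w_castLE i, pow_one]
  rfl

end CarnotGroup
namespace CarnotGroup

variable {n m k : ℕ} (G : CarnotGroup n m k)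

lemma differentiable_mul_left (g : Euc n) : Differentiable ℝ (G.mul g) := by
  have : G.mul g = (fun q : Euc n × Euc n => G.mul q.1 q.2) ∘ fun u => (g, u) := rfl
  rw [this]
  exact (G.smooth_mul.differentiable (by simp)).comp
    ((differentiable_const g).prodMk differentiable_id)

lemma X_apply_eq (i : Fin m) (y : Euc n) :
    G.X i y = fderiv ℝ (G.mul y) 0 (EuclideanSpace.single (Fin.castLE G.m_le_n i) 1) := by
  have := G.X_left_invariant y 0 i
  rwa [G.mul_zero', G.X_zero] at this

lemma pi1L_single (i : Fin m) :
    G.pi1L (EuclideanSpace.single (Fin.castLE G.m_le_n i) 1) = EuclideanSpace.single i 1 := by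
  ext i'
  show EuclideanSpace.single (Fin.castLE G.m_le_n i) (1:ℝ) (Fin.castLE G.m_le_n i') = _
  rw [EuclideanSpace.single_apply, EuclideanSpace.single_apply]
  congr 1
  simp only [eq_iff_iff]
  constructor
  · intro h; exact Fin.ext (by simpa using congrArg Fin.val h)
  · intro h; rw [h]

lemma pi1_X (i : Fin m) (y : Euc n) : G.pi1 (G.X i y) = EuclideanSpace.single i 1 := by
  have hd : HasFDerivAt (G.mul y) (fderiv ℝ (G.mul y) 0) 0 :=
    (G.differentiable_mul_left y 0).hasFDerivAt
  have hcomp : HasFDerivAt (fun u => G.pi1L (G.mul y u))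
      (G.pi1L.comp (fderiv ℝ (G.mul y) 0)) 0 := G.pi1L.hasFDerivAt.comp 0 hd
  have heq : (fun u => G.pi1L (G.mul y u)) = fun u => G.pi1L y + G.pi1L u := by
    funext u
    rw [G.pi1L_apply, G.pi1L_apply, G.pi1L_apply, G.pi1_mul]
  rw [heq] at hcomp
  have hcomp2 : HasFDerivAt (fun u : Euc n => G.pi1L y + G.pi1L u) G.pi1L (0 : Euc n) :=
    (G.pi1L.hasFDerivAt (x := (0 : Euc n))).const_add (G.pi1L y)
  have huniq : G.pi1L.comp (fderiv ℝ (G.mul y) 0) = G.pi1L := hcomp.unique hcomp2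
  rw [← G.pi1L_apply, G.X_apply_eq i y]
  have := congrFun (congrArg (fun (L : Euc n →L[ℝ] Euc m) (v) => L v) huniq)
    (EuclideanSpace.single (Fin.castLE G.m_le_n i) 1)
  calc G.pi1L (fderiv ℝ (G.mul y) 0 (EuclideanSpace.single (Fin.castLE G.m_le_n i) 1))
      = (G.pi1L.comp (fderiv ℝ (G.mul y) 0)) (EuclideanSpace.single (Fin.castLE G.m_le_n i) 1) := rfl
    _ = G.pi1L (EuclideanSpace.single (Fin.castLE G.m_le_n i) 1) := this
    _ = EuclideanSpace.single i 1 := G.pi1L_single i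

lemma dilL_single_first (lam : ℝ) (i : Fin m) :
    G.dilL lam (EuclideanSpace.single (Fin.castLE G.m_le_n i) 1) =
      lam • EuclideanSpace.single (Fin.castLE G.m_le_n i) 1 := by
  rw [G.dilL_apply]
  ext j
  rw [G.dil_apply]
  show lam ^ G.w j * EuclideanSpace.single (Fin.castLE G.m_le_n i) (1:ℝ) j
    = lam * EuclideanSpace.single (Fin.castLE G.m_le_n i) (1:ℝ) j
  by_cases hcase : j = Fin.castLE G.m_le_n i
  · subst hcase; rw [G.w_castLE, pow_one]
  · rw [EuclideanSpace.single_apply, if_neg hcase]; ring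

/-- Homogeneity of the horizontal vector fields. -/
lemma dil_X (i : Fin m) (lam : ℝ) (hlam : lam ≠ 0) (u : Euc n) :
    G.dil lam (G.X i u) = lam • G.X i (G.dil lam u) := by
  set e := EuclideanSpace.single (Fin.castLE G.m_le_n i) (1:ℝ) with he
  have hfun : G.mul (G.dil lam u) = (G.dil lam) ∘ (G.mul u) ∘ (G.dil lam⁻¹) := by
    funext v
    show G.mul (G.dil lam u) v = G.dil lam (G.mul u (G.dil lam⁻¹ v))
    rw [G.dil_mul, G.dil_dil, mul_inv_cancel₀ hlam, G.dil_one]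
  have hd1 : HasFDerivAt (G.dil lam⁻¹) (G.dilL lam⁻¹) (0 : Euc n) := by
    have := (G.dilL lam⁻¹).hasFDerivAt (x := (0 : Euc n))
    convert this using 1
    funext v; rw [G.dilL_apply]
  have hd2 : HasFDerivAt (G.mul u) (fderiv ℝ (G.mul u) 0) (G.dil lam⁻¹ 0) := by
    rw [G.dil_zero_right]
    exact (G.differentiable_mul_left u 0).hasFDerivAt
  have hd3 : HasFDerivAt (G.dil lam) (G.dilL lam) (G.mul u (G.dil lam⁻¹ 0)) := by
    have := (G.dilL lam).hasFDerivAt (x := G.mul u (G.dil lam⁻¹ 0))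
    convert this using 1
    funext v; rw [G.dilL_apply]
  have hcomp : HasFDerivAt (G.mul (G.dil lam u))
      ((G.dilL lam).comp ((fderiv ℝ (G.mul u) 0).comp (G.dilL lam⁻¹))) (0 : Euc n) := by
    rw [hfun]
    exact hd3.comp (0 : Euc n) (hd2.comp (0 : Euc n) hd1)
  have hX : G.X i (G.dil lam u) =
      G.dilL lam (fderiv ℝ (G.mul u) 0 (G.dilL lam⁻¹ e)) := by
    rw [G.X_apply_eq i (G.dil lam u), hcomp.fderiv]
    rfl
  have h1 : G.dilL lam⁻¹ e = lam⁻¹ • e := G.dilL_single_first lam⁻¹ i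
  rw [hX, h1, (fderiv ℝ (G.mul u) 0).map_smul, (G.dilL lam).map_smul, smul_smul,
    mul_inv_cancel₀ hlam, one_smul, he, ← G.X_apply_eq i u, G.dilL_apply]

end CarnotGroup
section FTCchain

variable {n : ℕ}

set_option maxHeartbeats 1000000 in
/-- Chain-rule fundamental theorem of calculus for primitives of integrable functions,
composed with a smooth map. -/
lemma ftc_chain {T : ℝ} (hT : 0 ≤ T) (F : ℝ → Euc n)
    (hFi : IntegrableOn F (Icc 0 T) volume)
    (γ : ℝ → Euc n) (hγ : ∀ t ∈ Icc (0:ℝ) T, γ t = γ 0 + ∫ s in (0:ℝ)..t, F s)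
    (Φ : Euc n → Euc n) (hΦ : ContDiff ℝ (⊤ : ℕ∞) Φ) :
    ∀ t ∈ Icc (0:ℝ) T, Φ (γ t) = Φ (γ 0) + ∫ s in (0:ℝ)..t, fderiv ℝ Φ (γ s) (F s) := by
  classical
  set Ft : ℝ → Euc n := (Icc (0:ℝ) T).indicator F with hFt
  have hFti : Integrable Ft volume := (integrable_indicator_iff measurableSet_Icc).2 hFi
  have hcongr : ∀ u ∈ Icc (0:ℝ) T, (∫ s in (0:ℝ)..u, F s) = ∫ s in (0:ℝ)..u, Ft s := by
    intro u hu
    apply intervalIntegral.integral_congr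
    intro s hs
    rw [uIcc_of_le hu.1] at hs
    exact (indicator_of_mem (mem_of_mem_of_subset hs (Icc_subset_Icc le_rfl hu.2)) F).symm
  set g : ℝ → Euc n := fun u => γ 0 + ∫ s in (0:ℝ)..u, Ft s with hg
  have hgc : Continuous g := continuous_const.add
    (intervalIntegral.continuous_primitive (fun a b => hFti.intervalIntegrable) 0)
  have hγg : ∀ u ∈ Icc (0:ℝ) T, γ u = g u := by
    intro u hu
    rw [hγ u hu, hcongr u hu]
  -- compact bounds
  obtain ⟨R, hR⟩ : ∃ R : ℝ, ∀ u ∈ Icc (0:ℝ) T, ‖g u‖ ≤ R := by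
    obtain ⟨R, hR⟩ := (isCompact_Icc.image hgc).isBounded.subset_closedBall 0
    exact ⟨R, fun u hu => by simpa using hR (mem_image_of_mem g hu)⟩
  set B : Set (Euc n) := Metric.closedBall 0 (R + 1) with hB
  have hBconv : Convex ℝ B := convex_closedBall 0 (R + 1)
  have hgB : ∀ u ∈ Icc (0:ℝ) T, g u ∈ B := by
    intro u hu
    simp only [hB, Metric.mem_closedBall, dist_zero_right]
    linarith [hR u hu]
  have hΦd : Differentiable ℝ Φ := hΦ.differentiable (by simp)
  have hDc : Continuous (fun y => fderiv ℝ Φ y) := hΦ.continuous_fderiv (by simp)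
  obtain ⟨M₀, hM₀⟩ := (isCompact_closedBall (0 : Euc n) (R + 1)).exists_bound_of_continuousOn
    hDc.continuousOn
  set M : ℝ := max M₀ 0 with hM
  have hMnn : 0 ≤ M := le_max_right _ _
  have hMb : ∀ y ∈ B, ‖fderiv ℝ Φ y‖ ≤ M := fun y hy => (hM₀ y hy).trans (le_max_left _ _)
  have hLip : ∀ u ∈ B, ∀ v ∈ B, ‖Φ u - Φ v‖ ≤ M * ‖u - v‖ := by
    intro u hu v hv
    exact hBconv.norm_image_sub_le_of_norm_fderiv_le (fun y _ => hΦd y)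
      (fun y hy => hMb y hy) hv hu
  have hUC := (isCompact_closedBall (0 : Euc n) (R + 1)).uniformContinuousOn_of_continuous
    hDc.continuousOn
  rw [Metric.uniformContinuousOn_iff] at hUC
  set N : ℝ := ∫ x, ‖Ft x‖ with hN
  have hNnn : 0 ≤ N := integral_nonneg fun x => norm_nonneg _
  intro t ht
  have h0t : (0:ℝ) ≤ t := ht.1
  have hIcc : Icc (0:ℝ) t ⊆ Icc (0:ℝ) T := Icc_subset_Icc le_rfl ht.2
  -- the target integrand is interval integrable
  have hψm : AEStronglyMeasurable (fun u => fderiv ℝ Φ (g u) (Ft u)) (volume.restrict (Ioc 0 t)) := by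
    exact (isBoundedBilinearMap_apply.continuous.comp_aestronglyMeasurable
      (((hDc.comp hgc).aestronglyMeasurable).prodMk hFti.aestronglyMeasurable)).restrict
  have hψi : IntervalIntegrable (fun u => fderiv ℝ Φ (g u) (Ft u)) volume 0 t := by
    rw [intervalIntegrable_iff_integrableOn_Ioc_of_le h0t]
    refine Integrable.mono' ((hFti.norm.const_mul M).integrableOn) hψm ?_
    refine (ae_restrict_iff' measurableSet_Ioc).2 (ae_of_all _ fun u hu => ?_)
    calc ‖fderiv ℝ Φ (g u) (Ft u)‖ ≤ ‖fderiv ℝ Φ (g u)‖ * ‖Ft u‖ :=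
          ContinuousLinearMap.le_opNorm _ _
      _ ≤ M * ‖Ft u‖ := by
          have := hMb (g u) (hgB u (hIcc (Ioc_subset_Icc_self hu)))
          exact mul_le_mul_of_nonneg_right this (norm_nonneg _)
  suffices hmain : ∀ ε > (0:ℝ),
      ‖Φ (g t) - Φ (g 0) - ∫ s in (0:ℝ)..t, fderiv ℝ Φ (g s) (Ft s)‖ ≤ ε by
    have h0 : ‖Φ (g t) - Φ (g 0) - ∫ s in (0:ℝ)..t, fderiv ℝ Φ (g s) (Ft s)‖ ≤ 0 := by
      refine le_of_forall_pos_le_add fun ε hε => ?_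
      simpa using hmain ε hε
    have h0' : Φ (g t) - Φ (g 0) - (∫ s in (0:ℝ)..t, fderiv ℝ Φ (g s) (Ft s)) = 0 :=
      norm_le_zero_iff.mp h0
    have hfin : Φ (g t) = Φ (g 0) + ∫ s in (0:ℝ)..t, fderiv ℝ Φ (g s) (Ft s) := by
      have h1 : Φ (g t) - Φ (g 0) = ∫ s in (0:ℝ)..t, fderiv ℝ Φ (g s) (Ft s) :=
        sub_eq_zero.mp h0'
      have h2 := sub_eq_iff_eq_add.mp h1
      rw [h2, add_comm]
    rw [hγg t ht, hγg 0 (left_mem_Icc.2 hT)]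
    rw [hfin]
    congr 1
    apply intervalIntegral.integral_congr
    intro s hs
    rw [uIcc_of_le h0t] at hs
    show (fderiv ℝ Φ (g s)) (Ft s) = (fderiv ℝ Φ (γ s)) (F s)
    rw [hγg s (hIcc hs), hFt, indicator_of_mem (hIcc hs) F]
  intro ε hε
  obtain ⟨δ', hδ'pos, hδ'⟩ := hUC (ε / (3 * (N + 1))) (by positivity)
  set δ : ℝ := min 1 (min (δ' / 2) (ε / (3 * (M + 1)))) with hδ
  have hδpos : 0 < δ := by
    apply lt_min one_pos
    apply lt_min (by linarith) (by positivity)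
  obtain ⟨h, hsupp, hL1, hhc, hhi⟩ := hFti.exists_hasCompactSupport_integral_sub_le hδpos
  set gh : ℝ → Euc n := fun u => γ 0 + ∫ s in (0:ℝ)..u, h s with hgh
  have hghc : Continuous gh := continuous_const.add
    (intervalIntegral.continuous_primitive (fun a b => hhi.intervalIntegrable) 0)
  have hdiffi : Integrable (fun x => Ft x - h x) volume := hFti.sub hhi
  have hclose : ∀ u ∈ Icc (0:ℝ) t, ‖g u - gh u‖ ≤ δ := by
    intro u hu
    have : g u - gh u = ∫ s in (0:ℝ)..u, (Ft s - h s) := by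
      rw [hg, hgh]
      simp only [add_sub_add_left_eq_sub]
      rw [intervalIntegral.integral_sub hFti.intervalIntegrable hhi.intervalIntegrable]
    rw [this]
    calc ‖∫ s in (0:ℝ)..u, (Ft s - h s)‖ ≤ ∫ s in (0:ℝ)..u, ‖Ft s - h s‖ :=
          intervalIntegral.norm_integral_le_integral_norm hu.1
      _ = ∫ s in Ioc (0:ℝ) u, ‖Ft s - h s‖ := intervalIntegral.integral_of_le hu.1
      _ ≤ ∫ s, ‖Ft s - h s‖ := setIntegral_le_integral hdiffi.norm
          (ae_of_all _ fun s => norm_nonneg _)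
      _ ≤ δ := hL1
  have hghB : ∀ u ∈ Icc (0:ℝ) t, gh u ∈ B := by
    intro u hu
    simp only [hB, Metric.mem_closedBall, dist_zero_right]
    have h1 := hclose u hu
    have h2 := hR u (hIcc hu)
    have h3 : δ ≤ 1 := min_le_left _ _
    calc ‖gh u‖ = ‖g u - (g u - gh u)‖ := by rw [sub_sub_cancel]
      _ ≤ ‖g u‖ + ‖g u - gh u‖ := norm_sub_le _ _
      _ ≤ R + 1 := by linarith
  -- FTC for the smooth approximation
  have hder : ∀ u : ℝ, HasDerivAt gh (h u) u := by
    intro u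
    apply HasDerivAt.const_add
    exact intervalIntegral.integral_hasDerivAt_right (hhi.intervalIntegrable)
      (hhc.stronglyMeasurableAtFilter _ _) hhc.continuousAt
  have hcder : ∀ u : ℝ, HasDerivAt (fun v => Φ (gh v)) (fderiv ℝ Φ (gh u) (h u)) u := by
    intro u
    exact ((hΦd (gh u)).hasFDerivAt).comp_hasDerivAt u (hder u)
  have hii0 : IntervalIntegrable (fun u => fderiv ℝ Φ (gh u) (h u)) volume 0 t :=
    ((hDc.comp hghc).clm_apply hhc).intervalIntegrable 0 t
  have hFTC : Φ (gh t) - Φ (gh 0) = ∫ u in (0:ℝ)..t, fderiv ℝ Φ (gh u) (h u) := by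
    exact (intervalIntegral.integral_eq_sub_of_hasDerivAt (fun u _ => hcder u) hii0).symm
  have hgh0 : gh 0 = g 0 := by
    rw [hgh, hg]
    simp
  -- decompose
  have hdec : Φ (g t) - Φ (g 0) - (∫ s in (0:ℝ)..t, fderiv ℝ Φ (g s) (Ft s)) =
      (Φ (g t) - Φ (gh t)) +
        ∫ u in (0:ℝ)..t, (fderiv ℝ Φ (gh u) (h u) - fderiv ℝ Φ (g u) (Ft u)) := by
    rw [intervalIntegral.integral_sub hii0 hψi, ← hFTC, hgh0]
    abel
  rw [hdec]
  have hT1 : ‖Φ (g t) - Φ (gh t)‖ ≤ M * δ := by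
    have := hLip (g t) (hgB t ht) (gh t) (hghB t (right_mem_Icc.2 h0t))
    exact this.trans (mul_le_mul_of_nonneg_left (hclose t (right_mem_Icc.2 h0t)) hMnn)
  have hptwise : ∀ u ∈ Icc (0:ℝ) t,
      ‖fderiv ℝ Φ (gh u) (h u) - fderiv ℝ Φ (g u) (Ft u)‖ ≤
        M * ‖h u - Ft u‖ + (ε / (3 * (N + 1))) * ‖Ft u‖ := by
    intro u hu
    have hsplit : fderiv ℝ Φ (gh u) (h u) - fderiv ℝ Φ (g u) (Ft u) =
        fderiv ℝ Φ (gh u) (h u - Ft u) +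
          (fderiv ℝ Φ (gh u) - fderiv ℝ Φ (g u)) (Ft u) := by
      rw [map_sub, ContinuousLinearMap.sub_apply]
      abel
    rw [hsplit]
    refine (norm_add_le _ _).trans (add_le_add ?_ ?_)
    · calc ‖fderiv ℝ Φ (gh u) (h u - Ft u)‖ ≤ ‖fderiv ℝ Φ (gh u)‖ * ‖h u - Ft u‖ :=
            ContinuousLinearMap.le_opNorm _ _
        _ ≤ M * ‖h u - Ft u‖ :=
            mul_le_mul_of_nonneg_right (hMb _ (hghB u hu)) (norm_nonneg _)
    · calc ‖(fderiv ℝ Φ (gh u) - fderiv ℝ Φ (g u)) (Ft u)‖ ≤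
            ‖fderiv ℝ Φ (gh u) - fderiv ℝ Φ (g u)‖ * ‖Ft u‖ :=
            ContinuousLinearMap.le_opNorm _ _
        _ ≤ (ε / (3 * (N + 1))) * ‖Ft u‖ := by
            refine mul_le_mul_of_nonneg_right ?_ (norm_nonneg _)
            have hd : dist (gh u) (g u) < δ' := by
              rw [dist_eq_norm, ← norm_neg, neg_sub]
              have := hclose u hu
              have hδδ' : δ ≤ δ' / 2 := (min_le_right _ _).trans (min_le_left _ _)
              linarith
            have := hδ' (gh u) (hghB u hu) (g u) (hgB u (hIcc hu)) hd
            rw [dist_eq_norm] at this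
            exact this.le
  have hIoc_le : ∀ (φ : ℝ → ℝ), Integrable φ volume → (∀ s, 0 ≤ φ s) →
      (∫ s in (0:ℝ)..t, φ s) ≤ ∫ s, φ s := by
    intro φ hφ hφ0
    rw [intervalIntegral.integral_of_le h0t]
    exact setIntegral_le_integral hφ (ae_of_all _ hφ0)
  have hint1 : (∫ s in (0:ℝ)..t, ‖h s - Ft s‖) ≤ δ := by
    have : (∫ s in (0:ℝ)..t, ‖h s - Ft s‖) = ∫ s in (0:ℝ)..t, ‖Ft s - h s‖ := by
      simp_rw [norm_sub_rev]
    rw [this]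
    exact (hIoc_le _ hdiffi.norm fun s => norm_nonneg _).trans hL1
  have hint2 : (∫ s in (0:ℝ)..t, ‖Ft s‖) ≤ N :=
    hIoc_le _ hFti.norm fun s => norm_nonneg _
  have hii1 : IntervalIntegrable (fun u => ‖h u - Ft u‖) volume 0 t :=
    (hhi.sub hFti).norm.intervalIntegrable
  have hii2 : IntervalIntegrable (fun u => ‖Ft u‖) volume 0 t :=
    hFti.norm.intervalIntegrable
  have hT2 : ‖∫ u in (0:ℝ)..t, (fderiv ℝ Φ (gh u) (h u) - fderiv ℝ Φ (g u) (Ft u))‖ ≤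
      M * δ + (ε / (3 * (N + 1))) * N := by
    calc ‖∫ u in (0:ℝ)..t, (fderiv ℝ Φ (gh u) (h u) - fderiv ℝ Φ (g u) (Ft u))‖
        ≤ ∫ u in (0:ℝ)..t, ‖fderiv ℝ Φ (gh u) (h u) - fderiv ℝ Φ (g u) (Ft u)‖ :=
          intervalIntegral.norm_integral_le_integral_norm h0t
      _ ≤ ∫ u in (0:ℝ)..t, (M * ‖h u - Ft u‖ + (ε / (3 * (N + 1))) * ‖Ft u‖) := by
          refine intervalIntegral.integral_mono_on h0t ?_ ?_ hptwise
          · exact (hii0.sub hψi).norm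
          · exact (hii1.const_mul M).add (hii2.const_mul _)
      _ = M * (∫ u in (0:ℝ)..t, ‖h u - Ft u‖) +
            (ε / (3 * (N + 1))) * ∫ u in (0:ℝ)..t, ‖Ft u‖ := by
          rw [intervalIntegral.integral_add (hii1.const_mul M) (hii2.const_mul _),
            intervalIntegral.integral_const_mul, intervalIntegral.integral_const_mul]
      _ ≤ M * δ + (ε / (3 * (N + 1))) * N := by
          have h1 : M * (∫ u in (0:ℝ)..t, ‖h u - Ft u‖) ≤ M * δ :=
            mul_le_mul_of_nonneg_left hint1 hMnn
          have h2 : (ε / (3 * (N + 1))) * (∫ u in (0:ℝ)..t, ‖Ft u‖) ≤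
              (ε / (3 * (N + 1))) * N :=
            mul_le_mul_of_nonneg_left hint2 (by positivity)
          linarith
  have hδ3 : δ ≤ ε / (3 * (M + 1)) := (min_le_right _ _).trans (min_le_right _ _)
  have hMδ : M * δ ≤ ε / 3 := by
    have h1 : M * δ ≤ M * (ε / (3 * (M + 1))) := mul_le_mul_of_nonneg_left hδ3 hMnn
    have h2 : M * (ε / (3 * (M + 1))) ≤ ε / 3 := by
      rw [mul_div_assoc', div_le_div_iff₀ (by linarith) (by norm_num)]
      nlinarith [hε.le, hMnn]
    linarith
  have hεN : (ε / (3 * (N + 1))) * N ≤ ε / 3 := by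
    rw [div_mul_eq_mul_div, div_le_div_iff₀ (by linarith) (by norm_num)]
    nlinarith [hε.le, hNnn]
  calc ‖(Φ (g t) - Φ (gh t)) +
        ∫ u in (0:ℝ)..t, (fderiv ℝ Φ (gh u) (h u) - fderiv ℝ Φ (g u) (Ft u))‖
      ≤ ‖Φ (g t) - Φ (gh t)‖ +
        ‖∫ u in (0:ℝ)..t, (fderiv ℝ Φ (gh u) (h u) - fderiv ℝ Φ (g u) (Ft u))‖ :=
        norm_add_le _ _
    _ ≤ M * δ + (M * δ + (ε / (3 * (N + 1))) * N) := add_le_add hT1 hT2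
    _ ≤ ε := by linarith

end FTCchain
lemma abs_coord_le_norm {m' : ℕ} (v : Euc m') (i : Fin m') : |v i| ≤ ‖v‖ := by
  rw [EuclideanSpace.norm_eq, ← Real.sqrt_sq_eq_abs]
  apply Real.sqrt_le_sqrt
  have := Finset.single_le_sum (f := fun j => ‖v j‖ ^ 2) (fun j _ => sq_nonneg _)
    (Finset.mem_univ i)
  simpa [Real.norm_eq_abs, sq_abs] using this

lemma sum_smul_single {m' : ℕ} (v : Euc m') :
    ∑ i, v i • EuclideanSpace.single i (1:ℝ) = v := by
  ext j
  have h1 : (∑ i, v i • EuclideanSpace.single i (1:ℝ)) j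
      = ∑ i, (v i • EuclideanSpace.single i (1:ℝ)) j := by
    rw [WithLp.ofLp_sum]
    exact Finset.sum_apply j Finset.univ _
  rw [h1]
  have h2 : ∀ i : Fin m', (v i • EuclideanSpace.single i (1:ℝ)) j
      = v i * (if j = i then (1:ℝ) else 0) := by
    intro i
    show v i * EuclideanSpace.single i (1:ℝ) j = _
    rw [EuclideanSpace.single_apply]
  simp_rw [h2]
  simp

namespace CarnotGroup

variable {n m k : ℕ} (G : CarnotGroup n m k)

lemma contDiff_mul_left (g : Euc n) : ContDiff ℝ (⊤ : ℕ∞) (G.mul g) :=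
  G.smooth_mul.comp (contDiff_const.prodMk contDiff_id)

lemma coe_dilL (lam : ℝ) : ⇑(G.dilL lam) = G.dil lam := funext fun v => G.dilL_apply lam v

lemma hasFDerivAt_dil' (lam : ℝ) (p : Euc n) : HasFDerivAt (G.dil lam) (G.dilL lam) p := by
  rw [← G.coe_dilL]
  exact (G.dilL lam).hasFDerivAt

lemma contDiff_dil (lam : ℝ) : ContDiff ℝ (⊤ : ℕ∞) (G.dil lam) := by
  rw [← G.coe_dilL]
  exact (G.dilL lam).contDiff

lemma contDiff_phi (x : Euc n) (lam : ℝ) :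
    ContDiff ℝ (⊤ : ℕ∞) (fun v => G.mul x (G.dil lam (G.mul (-x) v))) :=
  (G.contDiff_mul_left x).comp ((G.contDiff_dil lam).comp (G.contDiff_mul_left (-x)))

lemma continuous_dil_pair : Continuous (fun p : ℝ × Euc n => G.dil p.1 p.2) := by
  have heq : (fun p : ℝ × Euc n => G.dil p.1 p.2)
      = fun p : ℝ × Euc n => (EuclideanSpace.equiv (Fin n) ℝ).symm
          (fun j => p.1 ^ G.w j * p.2 j) := by
    funext p
    ext j
    rw [G.dil_apply]
    rfl
  rw [heq]
  apply (EuclideanSpace.equiv (Fin n) ℝ).symm.continuous.comp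
  apply continuous_pi
  intro j
  exact (continuous_fst.pow _).mul ((EuclideanSpace.proj j).continuous.comp continuous_snd)

lemma horiz_F_integrableOn {S : Set (Euc n)} {T : ℝ} {γ : ℝ → Euc n} {a : ℝ → Euc m}
    (h : G.IsHorizIn S T γ a) :
    IntegrableOn (fun s => ∑ i, a s i • G.X i (γ s)) (Icc (0:ℝ) T) volume := by
  obtain ⟨hT, hmem, hγc, ham, ⟨C, hC⟩, hint⟩ := h
  have hK : IsCompact (γ '' Icc 0 T) := isCompact_Icc.image_of_continuousOn hγc
  have hMi : ∀ i : Fin m, ∃ Mi : ℝ, 0 ≤ Mi ∧ ∀ s ∈ Icc (0:ℝ) T, ‖G.X i (γ s)‖ ≤ Mi := by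
    intro i
    obtain ⟨Mi, hMi⟩ := hK.exists_bound_of_continuousOn (G.smooth_X i).continuous.continuousOn
    exact ⟨max Mi 0, le_max_right _ _,
      fun s hs => (hMi _ (mem_image_of_mem γ hs)).trans (le_max_left _ _)⟩
  choose Mi hMi0 hMib using hMi
  have hAESM : AEStronglyMeasurable (fun s => ∑ i, a s i • G.X i (γ s))
      (volume.restrict (Icc (0:ℝ) T)) := by
    apply Finset.aestronglyMeasurable_fun_sum
    intro i _
    apply AEStronglyMeasurable.fun_smul
    · exact (EuclideanSpace.proj i).continuous.comp_aestronglyMeasurable ham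
    · exact ((G.smooth_X i).continuous.comp_continuousOn hγc).aestronglyMeasurable
        measurableSet_Icc
  refine Integrable.mono'
    (integrableOn_const measure_Icc_lt_top.ne : IntegrableOn
      (fun _ : ℝ => (max C 0) * ∑ i, Mi i) (Icc (0:ℝ) T) volume) hAESM ?_
  filter_upwards [hC, ae_restrict_mem (measurableSet_Icc : MeasurableSet (Icc (0:ℝ) T))]
    with s hs hsmem
  calc ‖∑ i, a s i • G.X i (γ s)‖ ≤ ∑ i, ‖a s i • G.X i (γ s)‖ := norm_sum_le _ _
    _ ≤ ∑ i, (max C 0) * Mi i := by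
        apply Finset.sum_le_sum
        intro i _
        rw [norm_smul]
        apply mul_le_mul _ (hMib i s hsmem) (norm_nonneg _) (le_max_right _ _)
        exact (abs_coord_le_norm (a s) i).trans (hs.trans (le_max_left _ _))
    _ = (max C 0) * ∑ i, Mi i := by rw [Finset.mul_sum]

lemma horiz_a_integrableOn {S : Set (Euc n)} {T : ℝ} {γ : ℝ → Euc n} {a : ℝ → Euc m}
    (h : G.IsHorizIn S T γ a) : IntegrableOn a (Icc (0:ℝ) T) volume := by
  obtain ⟨hT, hmem, hγc, ham, ⟨C, hC⟩, hint⟩ := h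
  refine Integrable.mono'
    (integrableOn_const measure_Icc_lt_top.ne : IntegrableOn
      (fun _ : ℝ => C) (Icc (0:ℝ) T) volume) ham ?_
  exact hC

lemma horiz_F_intervalIntegrable {S : Set (Euc n)} {T : ℝ} {γ : ℝ → Euc n} {a : ℝ → Euc m}
    (h : G.IsHorizIn S T γ a) {t : ℝ} (ht : t ∈ Icc (0:ℝ) T) :
    IntervalIntegrable (fun s => ∑ i, a s i • G.X i (γ s)) volume 0 t := by
  apply IntegrableOn.intervalIntegrable
  rw [uIcc_of_le ht.1]
  exact (G.horiz_F_integrableOn h).mono_set (Icc_subset_Icc le_rfl ht.2)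

lemma horiz_a_intervalIntegrable {S : Set (Euc n)} {T : ℝ} {γ : ℝ → Euc n} {a : ℝ → Euc m}
    (h : G.IsHorizIn S T γ a) {t : ℝ} (ht : t ∈ Icc (0:ℝ) T) :
    IntervalIntegrable a volume 0 t := by
  apply IntegrableOn.intervalIntegrable
  rw [uIcc_of_le ht.1]
  exact (G.horiz_a_integrableOn h).mono_set (Icc_subset_Icc le_rfl ht.2)

/-- Along a horizontal curve, the first-layer coordinates are the primitive of the control. -/
lemma horiz_pi1 {S : Set (Euc n)} {T : ℝ} {γ : ℝ → Euc n} {a : ℝ → Euc m}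
    (h : G.IsHorizIn S T γ a) :
    ∀ t ∈ Icc (0:ℝ) T, G.pi1 (γ t) = G.pi1 (γ 0) + ∫ s in (0:ℝ)..t, a s := by
  intro t ht
  have hFii := G.horiz_F_intervalIntegrable h ht
  have hid := h.2.2.2.2.2 t ht
  have hptw : ∀ s : ℝ, G.pi1L (∑ i, a s i • G.X i (γ s)) = a s := by
    intro s
    rw [map_sum]
    have : ∀ i : Fin m, G.pi1L (a s i • G.X i (γ s)) = a s i • EuclideanSpace.single i (1:ℝ) := by
      intro i
      rw [ContinuousLinearMap.map_smul]
      congr 1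
      rw [G.pi1L_apply]
      exact G.pi1_X i (γ s)
    simp_rw [this]
    exact sum_smul_single (a s)
  have hswap : (∫ s in (0:ℝ)..t, a s)
      = G.pi1L (∫ s in (0:ℝ)..t, ∑ i, a s i • G.X i (γ s)) := by
    rw [← G.pi1L.intervalIntegral_comp_comm hFii]
    apply intervalIntegral.integral_congr
    intro s _
    exact (hptw s).symm
  rw [hswap, ← G.pi1L_apply, ← G.pi1L_apply, hid, map_add]

/-- Pointwise intertwining of `fderiv` of the conjugated dilation with the horizontal fields. -/
lemma phi_fderiv_X (x : Euc n) {lam : ℝ} (hlam : lam ≠ 0) (y : Euc n) (i : Fin m) :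
    fderiv ℝ (fun v => G.mul x (G.dil lam (G.mul (-x) v))) y (G.X i y)
      = lam • G.X i (G.mul x (G.dil lam (G.mul (-x) y))) := by
  have h1 : HasFDerivAt (G.mul (-x)) (fderiv ℝ (G.mul (-x)) y) y :=
    ((G.differentiable_mul_left (-x)) y).hasFDerivAt
  have h2 : HasFDerivAt (G.dil lam) (G.dilL lam) (G.mul (-x) y) := G.hasFDerivAt_dil' lam _
  have h3 : HasFDerivAt (G.mul x) (fderiv ℝ (G.mul x) (G.dil lam (G.mul (-x) y)))
      (G.dil lam (G.mul (-x) y)) := ((G.differentiable_mul_left x) _).hasFDerivAt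
  have hcomp : HasFDerivAt (fun v => G.mul x (G.dil lam (G.mul (-x) v)))
      ((fderiv ℝ (G.mul x) (G.dil lam (G.mul (-x) y))).comp
        ((G.dilL lam).comp (fderiv ℝ (G.mul (-x)) y))) y :=
    h3.comp y (h2.comp y h1)
  rw [hcomp.fderiv]
  show fderiv ℝ (G.mul x) (G.dil lam (G.mul (-x) y))
      (G.dilL lam (fderiv ℝ (G.mul (-x)) y (G.X i y))) = _
  rw [← G.X_left_invariant (-x) y i, G.dilL_apply, G.dil_X i lam hlam,
    (fderiv ℝ (G.mul x) (G.dil lam (G.mul (-x) y))).map_smul,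
    ← G.X_left_invariant x (G.dil lam (G.mul (-x) y)) i]

/-- Dilating a horizontal curve around a point `x` produces a horizontal curve. -/
lemma horiz_dilate {S Ω : Set (Euc n)} {T : ℝ} {γ : ℝ → Euc n} {a : ℝ → Euc m}
    (h : G.IsHorizIn S T γ a) (x : Euc n) {lam : ℝ} (hlam : 0 < lam)
    (hmem : ∀ s ∈ Icc (0:ℝ) T, G.mul x (G.dil lam (G.mul (-x) (γ s))) ∈ Ω) :
    G.IsHorizIn Ω T (fun s => G.mul x (G.dil lam (G.mul (-x) (γ s))))
      (fun s => lam • a s) := by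
  obtain ⟨hT, hmemS, hγc, ham, ⟨C, hC⟩, hint⟩ := h
  have hΦ : ContDiff ℝ (⊤ : ℕ∞) (fun v => G.mul x (G.dil lam (G.mul (-x) v))) := G.contDiff_phi x lam
  refine ⟨hT, hmem, hΦ.continuous.comp_continuousOn hγc, ham.const_smul lam, ⟨lam * C, ?_⟩, ?_⟩
  · filter_upwards [hC] with s hs
    rw [norm_smul, Real.norm_eq_abs, abs_of_pos hlam]
    exact mul_le_mul_of_nonneg_left hs hlam.le
  · intro t ht
    have hkey := ftc_chain (le_of_lt hT) _ (G.horiz_F_integrableOn ⟨hT, hmemS, hγc, ham, ⟨C, hC⟩, hint⟩)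
      γ hint _ hΦ t ht
    show G.mul x (G.dil lam (G.mul (-x) (γ t))) = G.mul x (G.dil lam (G.mul (-x) (γ 0)))
      + ∫ s in (0:ℝ)..t, ∑ i, (lam • a s) i • G.X i (G.mul x (G.dil lam (G.mul (-x) (γ s))))
    rw [hkey]
    congr 1
    apply intervalIntegral.integral_congr
    intro s hs
    rw [uIcc_of_le ht.1] at hs
    show fderiv ℝ (fun v => G.mul x (G.dil lam (G.mul (-x) v))) (γ s)
        (∑ i, a s i • G.X i (γ s)) = _
    rw [map_sum]
    have hterm : ∀ i : Fin m,
        fderiv ℝ (fun v => G.mul x (G.dil lam (G.mul (-x) v))) (γ s) (a s i • G.X i (γ s))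
          = ((lam • a s) i) • G.X i (G.mul x (G.dil lam (G.mul (-x) (γ s)))) := by
      intro i
      rw [ContinuousLinearMap.map_smul, G.phi_fderiv_X x (ne_of_gt hlam) (γ s) i]
      rw [smul_smul]
      have : (lam • a s) i = lam * a s i := rfl
      rw [this, mul_comm]
    simp_rw [hterm]

end CarnotGroup
section SigmaStarLemmas

variable {n m : ℕ} {Ω : Set (Euc n)} {H : Euc n → Euc m → ℝ} {α : ℝ}

lemma alpha_pos (hH : SatisfiesH Ω H α) : 0 < α := lt_trans one_pos hH.one_lt_alpha

lemma zero_mem_Zset (hH : SatisfiesH Ω H α) {y : Euc n} (hy : y ∈ Ω) :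
    (0 : Euc m) ∈ Zset H y :=
  hH.ball_sub y hy (Metric.mem_ball_self (by have := alpha_pos hH; positivity))

lemma sigma_image_nonempty (hH : SatisfiesH Ω H α) {y : Euc n} (hy : y ∈ Ω) (p : Euc m) :
    ((fun ξ : Euc m => ⟪-ξ, p⟫) '' Zset H y).Nonempty :=
  ⟨_, mem_image_of_mem _ (zero_mem_Zset hH hy)⟩

lemma sigma_ub (hH : SatisfiesH Ω H α) {y : Euc n} (hy : y ∈ Ω) (p : Euc m) :
    ∀ v ∈ (fun ξ : Euc m => ⟪-ξ, p⟫) '' Zset H y, v ≤ α * ‖p‖ := by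
  rintro v ⟨ξ, hξ, rfl⟩
  have h1 : ⟪-ξ, p⟫ ≤ ‖-ξ‖ * ‖p‖ := real_inner_le_norm _ _
  have h2 : ‖ξ‖ ≤ α := by
    have := hH.sub_ball y hy hξ
    rw [Metric.mem_ball, dist_zero_right] at this
    exact this.le
  rw [norm_neg] at h1
  nlinarith [norm_nonneg p, norm_nonneg ξ]

lemma sigma_bddAbove (hH : SatisfiesH Ω H α) {y : Euc n} (hy : y ∈ Ω) (p : Euc m) :
    BddAbove ((fun ξ : Euc m => ⟪-ξ, p⟫) '' Zset H y) :=
  ⟨α * ‖p‖, fun v hv => sigma_ub hH hy p v hv⟩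

lemma inner_le_sigmaStar (hH : SatisfiesH Ω H α) {y : Euc n} (hy : y ∈ Ω) {ξ : Euc m}
    (hξ : ξ ∈ Zset H y) (p : Euc m) : ⟪-ξ, p⟫ ≤ sigmaStar H y p :=
  le_csSup (sigma_bddAbove hH hy p) (mem_image_of_mem _ hξ)

lemma sigmaStar_nonneg (hH : SatisfiesH Ω H α) {y : Euc n} (hy : y ∈ Ω) (p : Euc m) :
    0 ≤ sigmaStar H y p := by
  have := inner_le_sigmaStar hH hy (zero_mem_Zset hH hy) p
  simpa using this

lemma sigmaStar_le (hH : SatisfiesH Ω H α) {y : Euc n} (hy : y ∈ Ω) (p : Euc m) :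
    sigmaStar H y p ≤ α * ‖p‖ :=
  csSup_le (sigma_image_nonempty hH hy p) (sigma_ub hH hy p)

lemma norm_le_sigmaStar (hH : SatisfiesH Ω H α) {y : Euc n} (hy : y ∈ Ω) (p : Euc m) :
    ‖p‖ ≤ 2 * α * sigmaStar H y p := by
  have hα : 0 < α := alpha_pos hH
  by_cases hp : p = 0
  · rw [hp, norm_zero]
    have := sigmaStar_nonneg hH hy (0 : Euc m)
    nlinarith
  · have hpn : 0 < ‖p‖ := norm_pos_iff.2 hp
    set ξ : Euc m := -((1 / (2 * α)) • (‖p‖⁻¹ • p)) with hξdef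
    have hξnorm : ‖ξ‖ = 1 / (2 * α) := by
      rw [hξdef, norm_neg, norm_smul, norm_smul, norm_inv, norm_norm, Real.norm_eq_abs,
        abs_of_pos (div_pos one_pos (by linarith) : (0:ℝ) < 1 / (2 * α))]
      field_simp
    have hξZ : ξ ∈ Zset H y := by
      apply hH.ball_sub y hy
      rw [Metric.mem_ball, dist_zero_right, hξnorm]
      rw [div_lt_div_iff₀ (by positivity) (by positivity)]
      nlinarith
    have hval : ⟪-ξ, p⟫ = ‖p‖ / (2 * α) := by
      rw [hξdef, neg_neg, real_inner_smul_left, real_inner_smul_left,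
        real_inner_self_eq_norm_sq]
      field_simp
    have := inner_le_sigmaStar hH hy hξZ p
    rw [hval] at this
    rw [div_le_iff₀ (by positivity : (0:ℝ) < 2 * α)] at this
    nlinarith
  
/-- Inside the sublevel set, slightly shrunk points have a whole ball where `H < 0`. -/
lemma exists_interior_ball (hH : SatisfiesH Ω H α) {y : Euc n} (hy : y ∈ Ω) {p : Euc m}
    (hp : p ∈ Zset H y) {θ : ℝ} (hθ0 : 0 ≤ θ) (hθ1 : θ < 1) :
    ∃ ρ > (0:ℝ), ∀ u : Euc m, dist u (θ • p) < ρ → H y u < 0 := by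
  have hα : 0 < α := alpha_pos hH
  refine ⟨(1 - θ) / (2 * α), div_pos (by linarith) (by linarith), ?_⟩
  intro u hu
  -- every point of the ball of radius (1-θ)/α is in the sublevel set
  have claim1 : ∀ v : Euc m, dist v (θ • p) < (1 - θ) / α → v ∈ Zset H y := by
    intro v hv
    set w : Euc m := (1 - θ)⁻¹ • (v - θ • p) with hwdef
    have hwnorm : ‖w‖ < 1 / α := by
      rw [hwdef, norm_smul, norm_inv, Real.norm_eq_abs, abs_of_pos (by linarith : (0:ℝ) < 1 - θ)]
      rw [dist_eq_norm] at hv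
      rw [inv_mul_lt_iff₀ (by linarith : (0:ℝ) < 1 - θ)]
      calc ‖v - θ • p‖ < (1 - θ) / α := hv
        _ = (1 - θ) * (1 / α) := by ring
    have hwZ : w ∈ Zset H y := hH.ball_sub y hy (by rwa [Metric.mem_ball, dist_zero_right])
    have hcombo : v = θ • p + (1 - θ) • w := by
      rw [hwdef, smul_inv_smul₀ (by linarith : (1:ℝ) - θ ≠ 0)]
      abel
    rw [hcombo]
    have := hH.convex y hy hp hwZ hθ0 (by linarith : (0:ℝ) ≤ 1 - θ) (by ring)
    exact this
  -- so u is in the interior of the sublevel set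
  have hint : u ∈ interior (Zset H y) := by
    rw [mem_interior]
    refine ⟨Metric.ball u ((1 - θ) / (2 * α)), ?_, Metric.isOpen_ball, Metric.mem_ball_self (div_pos (by linarith) (by linarith))⟩
    intro v hv
    rw [Metric.mem_ball] at hv
    apply claim1
    calc dist v (θ • p) ≤ dist v u + dist u (θ • p) := dist_triangle _ _ _
      _ < (1 - θ) / (2 * α) + (1 - θ) / (2 * α) := add_lt_add hv hu
      _ = (1 - θ) / α := by ring
  have hmemZ : u ∈ Zset H y := interior_subset hint
  have hle : H y u ≤ 0 := hmemZ
  have hne : H y u ≠ 0 := by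
    intro h0
    have : u ∈ frontier (Zset H y) := by rw [hH.frontier_eq y hy]; exact h0
    rw [frontier, mem_diff] at this
    exact this.2 hint
  exact lt_of_le_of_ne hle hne

/-- Strictly interior comparison points below the support function. -/
lemma exists_strict_interior (hH : SatisfiesH Ω H α) {y : Euc n} (hy : y ∈ Ω) {p : Euc m}
    (hp : p ∈ Zset H y) (q : Euc m) {c : ℝ} (hc : c < ⟪-p, q⟫) :
    ∃ (p' : Euc m) (ρ : ℝ), 0 < ρ ∧ (∀ u : Euc m, dist u p' < ρ → H y u < 0) ∧
      (∀ u : Euc m, dist u p' < ρ → c < ⟪-u, q⟫) := by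
  -- choose a shrinking factor
  obtain ⟨θ, hθ0, hθ1, hθc⟩ : ∃ θ : ℝ, 0 ≤ θ ∧ θ < 1 ∧ c < θ * ⟪-p, q⟫ := by
    by_cases hcneg : c < 0
    · exact ⟨0, le_rfl, one_pos, by simpa using hcneg⟩
    · push_neg at hcneg
      have hv : 0 < ⟪-p, q⟫ := lt_of_le_of_lt hcneg hc
      refine ⟨(c + ⟪-p, q⟫) / (2 * ⟪-p, q⟫), by positivity, ?_, ?_⟩
      · rw [div_lt_one (by positivity)]
        linarith
      · have h2v : (c + ⟪-p, q⟫) / (2 * ⟪-p, q⟫) * ⟪-p, q⟫ = (c + ⟪-p, q⟫) / 2 := by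
          rw [div_mul_eq_mul_div, mul_comm (2:ℝ) ⟪-p, q⟫, ← div_div, mul_div_assoc,
            div_self (ne_of_gt hv), mul_one]
        rw [h2v]
        linarith
  obtain ⟨ρ₀, hρ₀, hball⟩ := exists_interior_ball hH hy hp hθ0 hθ1
  set ε : ℝ := θ * ⟪-p, q⟫ - c with hε
  have hεpos : 0 < ε := by rw [hε]; linarith
  set ρ : ℝ := min ρ₀ (ε / (2 * (‖q‖ + 1))) with hρ
  have hρpos : 0 < ρ := lt_min hρ₀ (by positivity)
  refine ⟨θ • p, ρ, hρpos, ?_, ?_⟩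
  · intro u hu
    exact hball u (lt_of_lt_of_le hu (min_le_left _ _))
  · intro u hu
    have hpq : ⟪-(θ • p), q⟫ = θ * ⟪-p, q⟫ := by
      rw [← smul_neg, real_inner_smul_left]
    have hdiff : ⟪-u, q⟫ - ⟪-(θ • p), q⟫ = ⟪θ • p - u, q⟫ := by
      rw [← inner_sub_left]
      congr 1
      abel
    have habs : |⟪θ • p - u, q⟫| ≤ ‖θ • p - u‖ * ‖q‖ := abs_real_inner_le_norm _ _
    have hdist : ‖θ • p - u‖ < ε / (2 * (‖q‖ + 1)) := by
      rw [← dist_eq_norm, dist_comm]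
      exact lt_of_lt_of_le hu (min_le_right _ _)
    have hsmall : ‖θ • p - u‖ * ‖q‖ < ε := by
      calc ‖θ • p - u‖ * ‖q‖ ≤ ‖θ • p - u‖ * (‖q‖ + 1) := by
            apply mul_le_mul_of_nonneg_left (by linarith) (norm_nonneg _)
        _ < (ε / (2 * (‖q‖ + 1))) * (‖q‖ + 1) := by
            apply mul_lt_mul_of_pos_right hdist (by positivity)
        _ = ε / 2 := by field_simp
        _ < ε := by linarith
    have : -(‖θ • p - u‖ * ‖q‖) ≤ ⟪θ • p - u, q⟫ := neg_le_of_abs_le habs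
    have hlow : ⟪-u, q⟫ ≥ θ * ⟪-p, q⟫ - ‖θ • p - u‖ * ‖q‖ := by
      have := hdiff
      nlinarith [neg_le_of_abs_le habs]
    calc c = θ * ⟪-p, q⟫ - ε := by rw [hε]; ring
      _ < θ * ⟪-p, q⟫ - ‖θ • p - u‖ * ‖q‖ := by linarith
      _ ≤ ⟪-u, q⟫ := hlow

/-- Countable-supremum representation of `σ*` via a dense sequence. -/
lemma sigmaStar_eq_iSup (hH : SatisfiesH Ω H α) {y : Euc n} (hy : y ∈ Ω) (q : Euc m) :
    sigmaStar H y q = ⨆ d : ℕ, (if H y (TopologicalSpace.denseSeq (Euc m) d) < 0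
      then ⟪-(TopologicalSpace.denseSeq (Euc m) d), q⟫ else 0) := by
  have hα : 0 < α := alpha_pos hH
  set D := TopologicalSpace.denseSeq (Euc m) with hD
  have hbdd : BddAbove (range (fun d : ℕ => if H y (D d) < 0 then ⟪-(D d), q⟫ else 0)) := by
    refine ⟨α * ‖q‖, ?_⟩
    rintro v ⟨d, rfl⟩
    show (if H y (D d) < 0 then ⟪-(D d), q⟫ else 0) ≤ α * ‖q‖
    split_ifs with hd
    · exact sigma_ub hH hy q _ (mem_image_of_mem _ (le_of_lt hd))
    · positivity
  apply le_antisymm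
  · apply csSup_le (sigma_image_nonempty hH hy q)
    rintro v ⟨p, hp, rfl⟩
    apply le_of_forall_lt
    intro c hc
    obtain ⟨p', ρ, hρ, hneg, hclose⟩ := exists_strict_interior hH hy hp q hc
    obtain ⟨d, hd0⟩ := (TopologicalSpace.denseRange_denseSeq (Euc m)).exists_dist_lt p' hρ
    have hd : dist (D d) p' < ρ := by rw [dist_comm]; exact hd0
    have h1 : H y (D d) < 0 := hneg _ hd
    have h2 : c < ⟪-(D d), q⟫ := hclose _ hd
    have h3 : (if H y (D d) < 0 then ⟪-(D d), q⟫ else 0) = ⟪-(D d), q⟫ := if_pos h1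
    have h4 := le_ciSup hbdd d
    exact lt_of_lt_of_le h2 (le_of_eq_of_le h3.symm h4)
  · apply ciSup_le
    intro d
    show (if H y (D d) < 0 then ⟪-(D d), q⟫ else 0) ≤ sigmaStar H y q
    split_ifs with hd
    · exact inner_le_sigmaStar hH hy (le_of_lt hd) q
    · exact sigmaStar_nonneg hH hy q

/-- Measurability and integrability of `σ*` along a bounded measurable curve/control pair. -/
lemma sigma_integrableOn (hΩo : IsOpen Ω) (hH : SatisfiesH Ω H α)
    {T : ℝ} (hT : 0 < T) {γ : ℝ → Euc n} {a : ℝ → Euc m}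
    (hγc : ContinuousOn γ (Icc 0 T)) (hγmem : ∀ t ∈ Icc (0:ℝ) T, γ t ∈ Ω)
    (ham : AEStronglyMeasurable a (volume.restrict (Icc (0:ℝ) T)))
    {C : ℝ} (hC : ∀ᵐ t ∂volume.restrict (Icc (0:ℝ) T), ‖a t‖ ≤ C) :
    IntegrableOn (fun s => sigmaStar H (γ s) (a s)) (Icc (0:ℝ) T) volume := by
  classical
  have hα : 0 < α := alpha_pos hH
  set μ := volume.restrict (Icc (0:ℝ) T) with hμ
  set D := TopologicalSpace.denseSeq (Euc m) with hD
  have hγ0 : γ 0 ∈ Ω := hγmem 0 (left_mem_Icc.2 hT.le)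
  have hγm : AEMeasurable γ μ := hγc.aemeasurable measurableSet_Icc
  set γ' := hγm.mk γ with hγ'
  have hγ'm : Measurable γ' := hγm.measurable_mk
  have hγ'eq : γ =ᵐ[μ] γ' := hγm.ae_eq_mk
  set γ'' : ℝ → Euc n := (γ' ⁻¹' Ω).piecewise γ' (fun _ => γ 0) with hγ''
  have hγ''m : Measurable γ'' :=
    Measurable.piecewise (hγ'm hΩo.measurableSet) hγ'm measurable_const
  have hγ''mem : ∀ s, γ'' s ∈ Ω := by
    intro s
    by_cases h : γ' s ∈ Ω
    · rw [show γ'' s = γ' s from Set.piecewise_eq_of_mem (γ' ⁻¹' Ω) γ' (fun _ => γ 0) h]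
      exact h
    · rw [show γ'' s = γ 0 from Set.piecewise_eq_of_notMem (γ' ⁻¹' Ω) γ' (fun _ => γ 0) h]
      exact hγ0
  have hγ''eq : γ =ᵐ[μ] γ'' := by
    filter_upwards [hγ'eq, ae_restrict_mem (measurableSet_Icc : MeasurableSet (Icc (0:ℝ) T))]
      with s h1 h2
    have hmem : γ' s ∈ Ω := h1 ▸ hγmem s h2
    rw [show γ'' s = γ' s from Set.piecewise_eq_of_mem (γ' ⁻¹' Ω) γ' (fun _ => γ 0) hmem]
    exact h1
  have ham' : AEMeasurable a μ := ham.aemeasurable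
  set a' := ham'.mk a with ha'
  have ha'm : Measurable a' := ham'.measurable_mk
  have ha'eq : a =ᵐ[μ] a' := ham'.ae_eq_mk
  -- measurable approximations of the sup representation
  have hψd : ∀ d : ℕ, Measurable (fun s => H (γ'' s) (D d)) := by
    intro d
    have hSm : MeasurableSet (Ω ×ˢ (univ : Set (Euc m))) :=
      hΩo.measurableSet.prod MeasurableSet.univ
    have hτ : Measurable (fun s => (⟨(γ'' s, D d), ⟨hγ''mem s, trivial⟩⟩ :
        ↥(Ω ×ˢ (univ : Set (Euc m))))) :=
      Measurable.subtype_mk (hγ''m.prodMk measurable_const)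
    exact hH.borel.comp hτ
  set φ : ℕ → ℝ → ℝ := fun d s => if H (γ'' s) (D d) < 0 then ⟪-(D d), a' s⟫ else 0 with hφ
  have hφm : ∀ d, Measurable (φ d) := by
    intro d
    apply Measurable.ite (measurableSet_lt (hψd d) measurable_const)
    · exact (innerSL ℝ (-(D d))).continuous.measurable.comp ha'm
    · exact measurable_const
  set Ψ : ℝ → ℝ := fun s => ⨆ d : ℕ, φ d s with hΨ
  have hΨm : Measurable Ψ := Measurable.iSup hφm
  have hae : (fun s => sigmaStar H (γ s) (a s)) =ᵐ[μ] Ψ := by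
    filter_upwards [hγ''eq, ha'eq,
      ae_restrict_mem (measurableSet_Icc : MeasurableSet (Icc (0:ℝ) T))] with s h1 h2 h3
    rw [sigmaStar_eq_iSup hH (hγmem s h3) (a s), hΨ]
    apply iSup_congr
    intro d
    rw [hφ, ← hD, h1, h2]
  have haesm : AEStronglyMeasurable (fun s => sigmaStar H (γ s) (a s)) μ :=
    hΨm.aestronglyMeasurable.congr hae.symm
  refine Integrable.mono'
    (integrableOn_const measure_Icc_lt_top.ne : IntegrableOn
      (fun _ : ℝ => α * C) (Icc (0:ℝ) T) volume) haesm ?_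
  filter_upwards [hC, ae_restrict_mem (measurableSet_Icc : MeasurableSet (Icc (0:ℝ) T))]
    with s hs h3
  rw [Real.norm_eq_abs, abs_of_nonneg (sigmaStar_nonneg hH (hγmem s h3) (a s))]
  calc sigmaStar H (γ s) (a s) ≤ α * ‖a s‖ := sigmaStar_le hH (hγmem s h3) (a s)
    _ ≤ α * C := mul_le_mul_of_nonneg_left hs hα.le

end SigmaStarLemmas
lemma intervalIntegral_le_of_bound {g : ℝ → ℝ} {T D : ℝ} (hT : 0 ≤ T) (hD : 0 ≤ D)
    (hb : ∀ᵐ s ∂(volume.restrict (Icc (0:ℝ) T)), g s ≤ D) :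
    (∫ s in (0:ℝ)..T, g s) ≤ D * T := by
  by_cases hint : IntervalIntegrable g volume 0 T
  · have h1 : (∫ s in (0:ℝ)..T, g s) ≤ ∫ _ in (0:ℝ)..T, D :=
      intervalIntegral.integral_mono_ae_restrict hT hint intervalIntegrable_const hb
    have h2 : (∫ _ in (0:ℝ)..T, D) = D * T := by
      rw [intervalIntegral.integral_const, smul_eq_mul]
      ring
    linarith
  · rw [intervalIntegral.integral_undef hint]
    positivity
set_option maxHeartbeats 1600000 in
/-- **Proposition (Dilation lower estimate).** If `H` satisfies (H) on a domain `Ω` and is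
upper semicontinuous on `HΩ`, then for every `x ∈ Ω`, `ξ ∈ ℝ^m` and `η ∈ ℝ^{n-m}` (encoded
as a single point `z ∈ ℝ^n` with `π(z) = ξ`),
`liminf_{t→0⁺} d_{σ*}(x, x·δ_t(ξ,η))/t ≥ σ*(x,ξ)`. -/
theorem optDist_dilation_liminf {n m k : ℕ} (G : CarnotGroup n m k) (Ω : Set (Euc n))
    (hΩo : IsOpen Ω) (hΩc : IsConnected Ω)
    (H : Euc n → Euc m → ℝ) (α : ℝ) (hH : SatisfiesH Ω H α)
    (husc : UpperSemicontinuousOn (fun q : Euc n × Euc m => H q.1 q.2)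
      (Ω ×ˢ (univ : Set (Euc m)))) :
    ∀ x ∈ Ω, ∀ z : Euc n,
      sigmaStar H x (G.pi1 z) ≤
        liminf (fun t : ℝ => G.optDist Ω H x (G.mul x (G.dil t z)) / t) (𝓝[>] (0:ℝ)) := by
  intro x hx z
  have hα : 0 < α := alpha_pos hH
  set A : Euc n → Set ℝ := fun y => {L | ∃ T γ a, G.IsHorizIn Ω T γ a ∧ γ 0 = x ∧ γ T = y ∧
      L = ∫ t in (0:ℝ)..T, sigmaStar H (γ t) (a t)} with hA
  have hAopt : ∀ y, G.optDist Ω H x y = sInf (A y) := fun y => rfl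
  have hLnonneg : ∀ y : Euc n, ∀ L ∈ A y, 0 ≤ L := by
    rintro y L ⟨T, γ, a, hhz, h0, hTy, rfl⟩
    apply intervalIntegral.integral_nonneg hhz.1.le
    intro s hs
    exact sigmaStar_nonneg hH (hhz.2.1 s hs) (a s)
  have hopt_nonneg : ∀ y : Euc n, 0 ≤ G.optDist Ω H x y := by
    intro y
    rw [hAopt]
    exact Real.sInf_nonneg (hLnonneg y)
  -- ### Step A : a base curve at fixed scale `t₀`, and its dilations
  have hcont0 : Continuous (fun t : ℝ => G.mul x (G.dil t z)) :=
    (G.contDiff_mul_left x).continuous.comp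
      (G.continuous_dil_pair.comp (continuous_id.prodMk continuous_const))
  have hc0 : G.mul x (G.dil 0 z) = x := by rw [G.dil_zero, G.mul_zero']
  have hpre : (fun t : ℝ => G.mul x (G.dil t z)) ⁻¹' Ω ∈ 𝓝 (0:ℝ) := by
    apply hcont0.continuousAt.preimage_mem_nhds
    rw [hc0]
    exact hΩo.mem_nhds hx
  obtain ⟨t₀, ht₀pos, ht₀⟩ : ∃ t₀ > (0:ℝ), G.mul x (G.dil t₀ z) ∈ Ω := by
    obtain ⟨ε, hεpos, hε⟩ := Metric.mem_nhds_iff.1 hpre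
    refine ⟨ε / 2, by positivity, hε ?_⟩
    rw [Metric.mem_ball, dist_zero_right, Real.norm_eq_abs, abs_of_pos (by positivity)]
    linarith
  obtain ⟨T₀, γ₀, a₀, hT₀, hmem₀, hcont₀, ham₀, hbd₀, hint₀, hstart₀, hend₀⟩ :=
    G.chow Ω hΩo hΩc.isPreconnected x hx _ ht₀
  have hhz₀ : G.IsHorizIn Ω T₀ γ₀ a₀ := ⟨hT₀, hmem₀, hcont₀, ham₀, ⟨1, hbd₀⟩, hint₀⟩
  set gmap : ℝ × Euc n → Euc n := fun p => G.mul x (G.dil p.1 (G.mul (-x) p.2)) with hgmap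
  have hgmc : Continuous gmap := (G.contDiff_mul_left x).continuous.comp
    (G.continuous_dil_pair.comp (continuous_fst.prodMk
      ((G.contDiff_mul_left (-x)).continuous.comp continuous_snd)))
  have hK₀ : IsCompact (γ₀ '' Icc 0 T₀) := isCompact_Icc.image_of_continuousOn hcont₀
  have hsub : ({(0:ℝ)} : Set ℝ) ×ˢ (γ₀ '' Icc 0 T₀) ⊆ gmap ⁻¹' Ω := by
    rintro ⟨lam, y⟩ ⟨hlam, hy⟩
    rw [mem_singleton_iff] at hlam
    subst hlam
    show G.mul x (G.dil 0 (G.mul (-x) y)) ∈ Ω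
    rw [G.dil_zero, G.mul_zero']
    exact hx
  obtain ⟨U, V, hUo, hVo, hU0, hKV, hUV⟩ :=
    generalized_tube_lemma isCompact_singleton hK₀ (hΩo.preimage hgmc) hsub
  obtain ⟨lam₀, hlam₀pos, hlam₀⟩ := Metric.isOpen_iff.1 hUo 0 (hU0 rfl)
  have hcurve : ∀ t : ℝ, 0 < t → t < lam₀ * t₀ →
      (G.IsHorizIn Ω T₀ (fun s => G.mul x (G.dil (t / t₀) (G.mul (-x) (γ₀ s))))
        (fun s => (t / t₀) • a₀ s)) ∧
      (fun s => G.mul x (G.dil (t / t₀) (G.mul (-x) (γ₀ s)))) 0 = x ∧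
      (fun s => G.mul x (G.dil (t / t₀) (G.mul (-x) (γ₀ s)))) T₀ = G.mul x (G.dil t z) := by
    intro t ht htlt
    have hlam : 0 < t / t₀ := by positivity
    have hlamlt : t / t₀ < lam₀ := by
      rw [div_lt_iff₀ ht₀pos]
      calc t < lam₀ * t₀ := htlt
        _ = lam₀ * t₀ := rfl
    have hmem' : ∀ s ∈ Icc (0:ℝ) T₀, G.mul x (G.dil (t / t₀) (G.mul (-x) (γ₀ s))) ∈ Ω := by
      intro s hs
      have hp : ((t / t₀, γ₀ s) : ℝ × Euc n) ∈ U ×ˢ V := by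
        constructor
        · apply hlam₀
          rw [Metric.mem_ball, dist_zero_right, Real.norm_eq_abs, abs_of_pos hlam]
          exact hlamlt
        · exact hKV (mem_image_of_mem γ₀ hs)
      exact hUV hp
    refine ⟨G.horiz_dilate hhz₀ x hlam hmem', ?_, ?_⟩
    · show G.mul x (G.dil (t / t₀) (G.mul (-x) (γ₀ 0))) = x
      rw [hstart₀, G.neg_mul_cancel, G.dil_zero_right, G.mul_zero']
    · show G.mul x (G.dil (t / t₀) (G.mul (-x) (γ₀ T₀))) = G.mul x (G.dil t z)
      rw [hend₀, G.mul_neg_cancel_left, G.dil_dil, div_mul_cancel₀ _ (ne_of_gt ht₀pos)]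
  set M : ℝ := α * T₀ / t₀ with hM
  have hub : ∀ t : ℝ, 0 < t → t < lam₀ * t₀ →
      G.optDist Ω H x (G.mul x (G.dil t z)) ≤ M * t := by
    intro t ht htlt
    obtain ⟨hdz, hst, hend⟩ := hcurve t ht htlt
    have hLmem : (∫ s in (0:ℝ)..T₀, sigmaStar H
        (G.mul x (G.dil (t / t₀) (G.mul (-x) (γ₀ s)))) ((t / t₀) • a₀ s)) ∈
          A (G.mul x (G.dil t z)) :=
      ⟨T₀, _, _, hdz, hst, hend, rfl⟩
    have hLle : (∫ s in (0:ℝ)..T₀, sigmaStar H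
        (G.mul x (G.dil (t / t₀) (G.mul (-x) (γ₀ s)))) ((t / t₀) • a₀ s)) ≤
          (α * (t / t₀)) * T₀ := by
      apply intervalIntegral_le_of_bound hT₀.le (by positivity)
      filter_upwards [hbd₀, ae_restrict_mem
        (measurableSet_Icc : MeasurableSet (Icc (0:ℝ) T₀))] with s hs hsmem
      calc sigmaStar H (G.mul x (G.dil (t / t₀) (G.mul (-x) (γ₀ s)))) ((t / t₀) • a₀ s)
          ≤ α * ‖(t / t₀) • a₀ s‖ := sigmaStar_le hH (hdz.2.1 s hsmem) _
        _ = α * ((t / t₀) * ‖a₀ s‖) := by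
            rw [norm_smul, Real.norm_eq_abs, abs_of_pos (by positivity)]
        _ ≤ α * (t / t₀) * 1 := by
            rw [mul_assoc]
            apply mul_le_mul_of_nonneg_left _ hα.le
            apply mul_le_mul_of_nonneg_left hs (by positivity)
        _ = α * (t / t₀) := mul_one _
    have hfin : α * (t / t₀) * T₀ = M * t := by
      rw [hM]
      field_simp
    rw [hAopt]
    exact ((csInf_le ⟨0, fun L hL => hLnonneg _ L hL⟩ hLmem).trans hLle).trans (le_of_eq hfin)
  have hubev : ∀ᶠ t in 𝓝[>] (0:ℝ), G.optDist Ω H x (G.mul x (G.dil t z)) / t ≤ M := by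
    filter_upwards [Ioo_mem_nhdsGT (by positivity : (0:ℝ) < lam₀ * t₀)] with t ht
    rw [div_le_iff₀ ht.1]
    exact hub t ht.1 ht.2
  have hfnonneg : ∀ᶠ t in 𝓝[>] (0:ℝ),
      0 ≤ G.optDist Ω H x (G.mul x (G.dil t z)) / t := by
    filter_upwards [self_mem_nhdsWithin] with t ht
    exact div_nonneg (hopt_nonneg _) (le_of_lt ht)
  -- ### Step B : eventual lower bound
  have hlow : ∀ b : ℝ, 0 < b → b < sigmaStar H x (G.pi1 z) →
      ∀ᶠ t in 𝓝[>] (0:ℝ), b ≤ G.optDist Ω H x (G.mul x (G.dil t z)) / t := by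
    intro b hbpos hblt
    obtain ⟨v, ⟨p₀, hp₀Z, rfl⟩, hbv⟩ :=
      exists_lt_of_lt_csSup (sigma_image_nonempty hH hx (G.pi1 z)) hblt
    obtain ⟨p₁, ρ, hρpos, hneg, hclose⟩ := exists_strict_interior hH hx hp₀Z (G.pi1 z) hbv
    have hHp₁ : H x p₁ < 0 := hneg p₁ (by simpa using hρpos)
    have hinner₁ : b < ⟪-p₁, G.pi1 z⟫ := hclose p₁ (by simpa using hρpos)
    obtain ⟨r, hrpos, hr⟩ : ∃ r > (0:ℝ), ∀ y ∈ Ω, dist y x < r → H y p₁ < 0 := by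
      have husc1 := husc (x, p₁) ⟨hx, trivial⟩ 0 hHp₁
      obtain ⟨ε, hεpos, hε⟩ := Metric.mem_nhdsWithin_iff.1 husc1
      refine ⟨ε, hεpos, fun y hyΩ hyd => ?_⟩
      have hq : ((y, p₁) : Euc n × Euc m) ∈ Metric.ball (x, p₁) ε ∩ (Ω ×ˢ univ) := by
        constructor
        · rw [Metric.mem_ball, Prod.dist_eq]
          simp only [dist_self]
          exact max_lt hyd hεpos
        · exact ⟨hyΩ, trivial⟩
      exact hε hq
    have hMi : ∀ i : Fin m, ∃ Mi : ℝ, 0 ≤ Mi ∧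
        ∀ y ∈ Metric.closedBall x r, ‖G.X i y‖ ≤ Mi := by
      intro i
      obtain ⟨Mi, hMi⟩ := (isCompact_closedBall x r).exists_bound_of_continuousOn
        (G.smooth_X i).continuous.continuousOn
      exact ⟨max Mi 0, le_max_right _ _, fun y hy => (hMi y hy).trans (le_max_left _ _)⟩
    choose Mi hMi0 hMib using hMi
    have hMisum : 0 ≤ ∑ i, Mi i := Finset.sum_nonneg fun i _ => hMi0 i
    set MM : ℝ := (∑ i, Mi i) + 1 with hMM
    have hMMpos : 0 < MM := by rw [hMM]; linarith
    set ε₀ : ℝ := min (lam₀ * t₀) (r / (2 * α * MM * b)) with hε₀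
    have hε₀pos : 0 < ε₀ := lt_min (by positivity) (by positivity)
    filter_upwards [Ioo_mem_nhdsGT hε₀pos] with t ht
    obtain ⟨htpos, htlt⟩ := ht
    have htlam : t < lam₀ * t₀ := lt_of_lt_of_le htlt (min_le_left _ _)
    have htb : t * b ≤ r / (2 * α * MM) := by
      have h1 : t ≤ r / (2 * α * MM * b) := le_of_lt (lt_of_lt_of_le htlt (min_le_right _ _))
      rw [← le_div_iff₀ hbpos, div_div]
      exact h1
    rw [le_div_iff₀ htpos, hAopt]
    apply le_csInf
    · obtain ⟨hdz, hst, hend⟩ := hcurve t htpos htlam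
      exact ⟨_, ⟨T₀, _, _, hdz, hst, hend, rfl⟩⟩
    · rintro L ⟨T, γ, a, hhz, hγ0, hγT, rfl⟩
      obtain ⟨hTpos, hmem, hγc, ham, hCex, hint⟩ := id hhz
      obtain ⟨C, hC⟩ := hCex
      have hσint : IntegrableOn (fun s => sigmaStar H (γ s) (a s)) (Icc (0:ℝ) T) volume :=
        sigma_integrableOn hΩo hH hTpos hγc hmem ham hC
      have hσii : IntervalIntegrable (fun s => sigmaStar H (γ s) (a s)) volume 0 T := by
        apply IntegrableOn.intervalIntegrable
        rw [uIcc_of_le hTpos.le]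
        exact hσint
      have haii : IntervalIntegrable a volume 0 T :=
        G.horiz_a_intervalIntegrable hhz (right_mem_Icc.2 hTpos.le)
      have hπ : (∫ s in (0:ℝ)..T, a s) = t • G.pi1 z := by
        have h1 := G.horiz_pi1 hhz T (right_mem_Icc.2 hTpos.le)
        rw [hγT, hγ0, G.pi1_mul, G.pi1_dil] at h1
        exact (add_left_cancel h1).symm
      by_cases hstay : ∀ s ∈ Icc (0:ℝ) T, dist (γ s) x < r
      · -- the curve stays close: inner-product comparison
        have hp₁Z : ∀ s ∈ Icc (0:ℝ) T, ⟪-p₁, a s⟫ ≤ sigmaStar H (γ s) (a s) := by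
          intro s hs
          exact inner_le_sigmaStar hH (hmem s hs)
            (le_of_lt (hr (γ s) (hmem s hs) (hstay s hs))) (a s)
        have hinnerii : IntervalIntegrable (fun s => ⟪-p₁, a s⟫) volume 0 T := by
          apply IntegrableOn.intervalIntegrable
          rw [uIcc_of_le hTpos.le]
          exact (innerSL ℝ (-p₁)).integrable_comp (G.horiz_a_integrableOn hhz)
        have hmono := intervalIntegral.integral_mono_on hTpos.le hinnerii hσii hp₁Z
        have hcomm : (∫ s in (0:ℝ)..T, ⟪-p₁, a s⟫) = ⟪-p₁, (∫ s in (0:ℝ)..T, a s)⟫ :=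
          (innerSL ℝ (-p₁)).intervalIntegral_comp_comm haii
        rw [hcomm, hπ, real_inner_smul_right] at hmono
        calc b * t = t * b := mul_comm _ _
          _ ≤ t * ⟪-p₁, G.pi1 z⟫ := mul_le_mul_of_nonneg_left hinner₁.le htpos.le
          _ ≤ ∫ s in (0:ℝ)..T, sigmaStar H (γ s) (a s) := hmono
      · -- the curve exits the ball of radius r
        push_neg at hstay
        obtain ⟨s₁, hs₁, hs₁r⟩ := hstay
        set Aset : Set ℝ := Icc 0 T ∩ (fun s => dist (γ s) x) ⁻¹' (Ici r) with hAset
        have hAclosed : IsClosed Aset :=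
          ContinuousOn.preimage_isClosed_of_isClosed
            ((continuous_id.dist continuous_const).comp_continuousOn hγc)
            isClosed_Icc isClosed_Ici
        have hAcomp : IsCompact Aset :=
          isCompact_Icc.of_isClosed_subset hAclosed inter_subset_left
        have hAne : Aset.Nonempty := ⟨s₁, hs₁, hs₁r⟩
        set τ := sInf Aset with hτ
        have hτA : τ ∈ Aset := hAcomp.sInf_mem hAne
        have hτIcc : τ ∈ Icc (0:ℝ) T := hτA.1
        have hτr : r ≤ dist (γ τ) x := hτA.2
        have hτpos : 0 < τ := by
          rcases eq_or_lt_of_le hτIcc.1 with heq | h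
          · exfalso
            rw [← heq, hγ0, dist_self] at hτr
            linarith
          · exact h
        have hτT : τ ≤ T := hτIcc.2
        have hbefore : ∀ s, 0 ≤ s → s < τ → dist (γ s) x < r := by
          intro s hs0 hsτ
          by_contra hge
          push_neg at hge
          have hsA : s ∈ Aset := ⟨⟨hs0, le_trans hsτ.le hτT⟩, hge⟩
          exact absurd (csInf_le hAcomp.bddBelow hsA) (not_le.2 hsτ)
        have hFii : IntervalIntegrable (fun s => ∑ i, a s i • G.X i (γ s)) volume 0 τ :=
          G.horiz_F_intervalIntegrable hhz hτIcc
        have haiiτ : IntervalIntegrable a volume 0 τ :=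
          G.horiz_a_intervalIntegrable hhz hτIcc
        have hσiiτ : IntervalIntegrable (fun s => sigmaStar H (γ s) (a s)) volume 0 τ := by
          apply IntegrableOn.intervalIntegrable
          rw [uIcc_of_le hτpos.le]
          exact hσint.mono_set (Icc_subset_Icc le_rfl hτT)
        have hdisp : r ≤ ∫ s in (0:ℝ)..τ, ‖∑ i, a s i • G.X i (γ s)‖ := by
          have h1 := hint τ hτIcc
          have h2 : dist (γ τ) x = ‖∫ s in (0:ℝ)..τ, ∑ i, a s i • G.X i (γ s)‖ := by
            rw [dist_eq_norm, h1, hγ0, add_sub_cancel_left]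
          calc r ≤ dist (γ τ) x := hτr
            _ = ‖∫ s in (0:ℝ)..τ, ∑ i, a s i • G.X i (γ s)‖ := h2
            _ ≤ ∫ s in (0:ℝ)..τ, ‖∑ i, a s i • G.X i (γ s)‖ :=
                intervalIntegral.norm_integral_le_integral_norm hτpos.le
        have hne : ∀ᵐ s ∂(volume.restrict (Icc (0:ℝ) τ)), s ≠ τ := by
          have h0 : (volume.restrict (Icc (0:ℝ) τ)) {s : ℝ | ¬ s ≠ τ} = 0 := by
            have hset : {s : ℝ | ¬ s ≠ τ} = {τ} := by ext s; simp
            rw [hset]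
            exact le_antisymm ((Measure.restrict_apply_le _ _).trans (by simp)) zero_le
          exact ae_iff.2 h0
        have hFbound : ∀ᵐ s ∂(volume.restrict (Icc (0:ℝ) τ)),
            ‖∑ i, a s i • G.X i (γ s)‖ ≤ MM * ‖a s‖ := by
          filter_upwards [hne, ae_restrict_mem
            (measurableSet_Icc : MeasurableSet (Icc (0:ℝ) τ))] with s hsne hsmem
          have hsball : γ s ∈ Metric.closedBall x r := by
            rw [Metric.mem_closedBall]
            exact (hbefore s hsmem.1 (lt_of_le_of_ne hsmem.2 hsne)).le
          calc ‖∑ i, a s i • G.X i (γ s)‖ ≤ ∑ i, ‖a s i • G.X i (γ s)‖ := norm_sum_le _ _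
            _ ≤ ∑ i, ‖a s‖ * Mi i := by
                apply Finset.sum_le_sum
                intro i _
                rw [norm_smul]
                exact mul_le_mul (abs_coord_le_norm (a s) i) (hMib i _ hsball)
                  (norm_nonneg _) (norm_nonneg _)
            _ = (∑ i, Mi i) * ‖a s‖ := by rw [← Finset.mul_sum, mul_comm]
            _ ≤ MM * ‖a s‖ := by
                apply mul_le_mul_of_nonneg_right _ (norm_nonneg _)
                rw [hMM]; linarith
        have c1 : (∫ s in (0:ℝ)..τ, ‖∑ i, a s i • G.X i (γ s)‖) ≤
            ∫ s in (0:ℝ)..τ, MM * ‖a s‖ :=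
          intervalIntegral.integral_mono_ae_restrict hτpos.le hFii.norm
            (haiiτ.norm.const_mul MM) hFbound
        have hnorm_a : ∀ s ∈ Icc (0:ℝ) τ, ‖a s‖ ≤ 2 * α * sigmaStar H (γ s) (a s) := by
          intro s hs
          exact norm_le_sigmaStar hH (hmem s (Icc_subset_Icc le_rfl hτT hs)) (a s)
        have c2 : (∫ s in (0:ℝ)..τ, ‖a s‖) ≤
            ∫ s in (0:ℝ)..τ, 2 * α * sigmaStar H (γ s) (a s) :=
          intervalIntegral.integral_mono_on hτpos.le haiiτ.norm
            (hσiiτ.const_mul _) hnorm_a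
        have c3 : (∫ s in (0:ℝ)..τ, sigmaStar H (γ s) (a s)) ≤
            ∫ s in (0:ℝ)..T, sigmaStar H (γ s) (a s) := by
          apply intervalIntegral.integral_mono_interval le_rfl hτpos.le hτT
          · refine (ae_restrict_iff' measurableSet_Ioc).2 (ae_of_all _ fun s hs => ?_)
            exact sigmaStar_nonneg hH (hmem s (Ioc_subset_Icc_self hs)) (a s)
          · exact hσii
        rw [intervalIntegral.integral_const_mul] at c1 c2
        have hrL : r ≤ 2 * α * MM * (∫ s in (0:ℝ)..T, sigmaStar H (γ s) (a s)) := by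
          have e1 : r ≤ MM * ∫ s in (0:ℝ)..τ, ‖a s‖ := le_trans hdisp c1
          have e2 : MM * (∫ s in (0:ℝ)..τ, ‖a s‖) ≤
              MM * (2 * α * ∫ s in (0:ℝ)..τ, sigmaStar H (γ s) (a s)) :=
            mul_le_mul_of_nonneg_left c2 hMMpos.le
          have e3 : MM * (2 * α * ∫ s in (0:ℝ)..τ, sigmaStar H (γ s) (a s)) ≤
              MM * (2 * α * ∫ s in (0:ℝ)..T, sigmaStar H (γ s) (a s)) := by
            apply mul_le_mul_of_nonneg_left _ hMMpos.le
            exact mul_le_mul_of_nonneg_left c3 (by positivity)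
          calc r ≤ MM * ∫ s in (0:ℝ)..τ, ‖a s‖ := e1
            _ ≤ MM * (2 * α * ∫ s in (0:ℝ)..T, sigmaStar H (γ s) (a s)) := le_trans e2 e3
            _ = 2 * α * MM * (∫ s in (0:ℝ)..T, sigmaStar H (γ s) (a s)) := by ring
        have hLge : r / (2 * α * MM) ≤ ∫ s in (0:ℝ)..T, sigmaStar H (γ s) (a s) := by
          rw [div_le_iff₀ (by positivity)]
          calc r ≤ 2 * α * MM * (∫ s in (0:ℝ)..T, sigmaStar H (γ s) (a s)) := hrL
            _ = (∫ s in (0:ℝ)..T, sigmaStar H (γ s) (a s)) * (2 * α * MM) := by ring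
        calc b * t = t * b := mul_comm _ _
          _ ≤ r / (2 * α * MM) := htb
          _ ≤ ∫ s in (0:ℝ)..T, sigmaStar H (γ s) (a s) := hLge
  -- ### Step C : conclusion via the definition of liminf
  rw [Filter.liminf_eq]
  have hSbdd : BddAbove {a_ : ℝ | ∀ᶠ t in 𝓝[>] (0:ℝ),
      a_ ≤ G.optDist Ω H x (G.mul x (G.dil t z)) / t} := by
    refine ⟨M, ?_⟩
    rintro b hb
    have hb' : ∀ᶠ t in 𝓝[>] (0:ℝ), b ≤ G.optDist Ω H x (G.mul x (G.dil t z)) / t := hb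
    obtain ⟨t, h1, h2⟩ := (hb'.and hubev).exists
    exact le_trans h1 h2
  apply le_of_forall_lt
  intro c hc
  obtain ⟨b, hcb, hbσ⟩ := exists_between hc
  have hbS : b ∈ {a_ : ℝ | ∀ᶠ t in 𝓝[>] (0:ℝ),
      a_ ≤ G.optDist Ω H x (G.mul x (G.dil t z)) / t} := by
    by_cases hbpos : 0 < b
    · exact hlow b hbpos hbσ
    · push_neg at hbpos
      filter_upwards [hfnonneg] with t h
      linarith
  exact lt_of_lt_of_le hcb (le_csSup hSbdd hbS)
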